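/- arXiv:2206.04953 — 7 statements merged into one kernel-verified Lean document; each statement's English description precedes it below -/
import Mathlib

section
/- Let M be a closed C^1-submanifold of ℝ^N, E an open neighbourhood of M with a C^1 retraction ψ: E → M, and R, ε > 0. Then there exists δ > 0 such that ‖ψ(x+z) − ψ(y+z) − (x − y)‖₂ ≤ ε‖x − y‖₂ for all x, y ∈ M with ‖x‖₂, ‖y‖₂ ≤ R and all z ∈ ℝ^N with ‖x − y‖₂ ≤ δ and ‖z‖₂ ≤ δ. -/
/-!
Near the compact set `M ∩ closedBall 0 R` the derivative of `ψ` is uniformly continuous, so by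
the mean value inequality there is a radius `δ` such that on every ball of radius `δ` centred at
a point `y` of this set, `ψ` is `ε/2`-close to its linearization `Dψ(y)`. Applied to the pairs
`(x + z, y + z)` and `(x, y)`, the latter using `ψ = id` on `M`, this puts both
`ψ(x + z) - ψ(y + z)` and `x - y` within `(ε/2)‖x - y‖` of `Dψ(y)(x - y)`.
-/

open Set

noncomputable section

def IsC1Submanifold (d : ℕ) {N : ℕ} (M : Set (EuclideanSpace ℝ (Fin N))) : Prop :=
  ∀ x ∈ M, ∃ (V U : Set (EuclideanSpace ℝ (Fin N)))
    (φ φinv : EuclideanSpace ℝ (Fin N) → EuclideanSpace ℝ (Fin N)),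
    IsOpen V ∧ IsOpen U ∧ (0 : EuclideanSpace ℝ (Fin N)) ∈ V ∧ x ∈ U ∧ φ 0 = x ∧
    ContDiffOn ℝ 1 φ V ∧ ContDiffOn ℝ 1 φinv U ∧
    Set.MapsTo φ V U ∧ Set.MapsTo φinv U V ∧
    (∀ v ∈ V, φinv (φ v) = v) ∧ (∀ u ∈ U, φ (φinv u) = u) ∧
    φ '' ({y : EuclideanSpace ℝ (Fin N) | ∀ i : Fin N, d ≤ (i : ℕ) → y i = 0} ∩ V) = M ∩ U

def TangentSpaceAt {N : ℕ} (M : Set (EuclideanSpace ℝ (Fin N)))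
    (x : EuclideanSpace ℝ (Fin N)) : Set (EuclideanSpace ℝ (Fin N)) :=
  {v | ∃ γ : ℝ → EuclideanSpace ℝ (Fin N),
    ContDiffOn ℝ 1 γ (Set.Ioo (-1 : ℝ) 1) ∧ (∀ t ∈ Set.Ioo (-1 : ℝ) 1, γ t ∈ M) ∧
    γ 0 = x ∧ derivWithin γ (Set.Ioo (-1 : ℝ) 1) 0 = v}

open Metric

theorem IsCompact.exists_pos_forall_norm_image_sub_sub_fderiv_le
    {G H : Type*} [NormedAddCommGroup G] [NormedSpace ℝ G]
    [NormedAddCommGroup H] [NormedSpace ℝ H] {f : G → H} {U K : Set G}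
    (hU : IsOpen U) (hf : ContDiffOn ℝ 1 f U) (hK : IsCompact K) (hKU : K ⊆ U)
    {ε : ℝ} (hε : 0 < ε) :
    ∃ δ > 0, ∀ y ∈ K, ball y δ ⊆ U ∧ ∀ a ∈ ball y δ, ∀ b ∈ ball y δ,
      ‖f b - f a - fderiv ℝ f y (b - a)‖ ≤ ε * ‖b - a‖ := by
  obtain ⟨r, hr, hrU⟩ := hK.exists_thickening_subset_open hU hKU
  have hf' : ∀ y ∈ K, ContinuousAt (fderiv ℝ f) y := fun y hy =>
    (hf.continuousOn_fderiv_of_isOpen hU le_rfl).continuousAt (hU.mem_nhds (hKU hy))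
  obtain ⟨η, hη, hclose⟩ := mem_uniformity_dist.1
    (hK.uniformContinuousAt_of_continuousAt _ hf' (dist_mem_uniformity hε))
  refine ⟨min r η, lt_min hr hη, fun y hy => ?_⟩
  have hball : ball y (min r η) ⊆ U :=
    (ball_subset_ball (min_le_left _ _)).trans ((ball_subset_thickening hy r).trans hrU)
  refine ⟨hball, fun a ha b hb =>
    (convex_ball y _).norm_image_sub_le_of_norm_fderiv_le' (fun w hw => ?_) (fun w hw => ?_) ha hb⟩
  · exact (hf.differentiableOn one_ne_zero).differentiableAt (hU.mem_nhds (hball hw))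
  · have hyw : dist y w < η := (mem_ball'.1 hw).trans_le (min_le_right _ _)
    rw [← dist_eq_norm, dist_comm]
    exact (hclose hyw hy).le

theorem stmt2_general {N : ℕ} (M : Set (EuclideanSpace ℝ (Fin N)))
    (hMclosed : IsClosed M)
    (E : Set (EuclideanSpace ℝ (Fin N))) (hEopen : IsOpen E) (hME : M ⊆ E)
    (ψ : EuclideanSpace ℝ (Fin N) → EuclideanSpace ℝ (Fin N))
    (hψC1 : ContDiffOn ℝ 1 ψ E)
    (hψid : ∀ x ∈ M, ψ x = x)
    (R ε : ℝ) (hε : 0 < ε) :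
    ∃ δ > 0, ∀ x ∈ M, ∀ y ∈ M, ∀ z : EuclideanSpace ℝ (Fin N),
      ‖x‖ ≤ R → ‖y‖ ≤ R → ‖x - y‖ ≤ δ → ‖z‖ ≤ δ →
      x + z ∈ E ∧ y + z ∈ E ∧
      ‖ψ (x + z) - ψ (y + z) - (x - y)‖ ≤ ε * ‖x - y‖ := by
  obtain ⟨δ, hδ, hlin⟩ := ((isCompact_closedBall 0 R).inter_left hMclosed)
    |>.exists_pos_forall_norm_image_sub_sub_fderiv_le hEopen hψC1 (fun x hx => hME hx.1)
      (half_pos hε)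
  refine ⟨δ / 3, by positivity, fun x hx y hy z _ hyR hxy hz => ?_⟩
  obtain ⟨hball, hlin⟩ := hlin y ⟨hy, mem_closedBall_zero_iff.2 hyR⟩
  have hnear : ∀ w, ‖w - y‖ ≤ 2 * (δ / 3) → w ∈ ball y δ := fun w hw =>
    mem_ball_iff_norm.2 (by linarith)
  have hx_mem : x ∈ ball y δ := hnear x (by linarith [norm_nonneg z])
  have hxz_mem : x + z ∈ ball y δ :=
    hnear _ (by rw [add_sub_right_comm]; exact (norm_add_le _ _).trans (by linarith))
  have hyz_mem : y + z ∈ ball y δ := hnear _ (by rw [add_sub_cancel_left]; linarith)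
  refine ⟨hball hxz_mem, hball hyz_mem, ?_⟩
  set L := fderiv ℝ ψ y
  have hshift := hlin _ hyz_mem _ hxz_mem
  rw [add_sub_add_right_eq_sub] at hshift
  have hdiag := hlin _ (mem_ball_self hδ) _ hx_mem
  rw [hψid x hx, hψid y hy, norm_sub_rev] at hdiag
  calc ‖ψ (x + z) - ψ (y + z) - (x - y)‖
      ≤ ‖ψ (x + z) - ψ (y + z) - L (x - y)‖ + ‖L (x - y) - (x - y)‖ :=
        norm_sub_le_norm_sub_add_norm_sub _ _ _
    _ ≤ ε / 2 * ‖x - y‖ + ε / 2 * ‖x - y‖ := add_le_add hshift hdiag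
    _ = ε * ‖x - y‖ := by ring

theorem stmt2 {N d : ℕ} (M : Set (EuclideanSpace ℝ (Fin N)))
    (hM : IsC1Submanifold d M) (hMclosed : IsClosed M)
    (E : Set (EuclideanSpace ℝ (Fin N))) (hEopen : IsOpen E) (hME : M ⊆ E)
    (ψ : EuclideanSpace ℝ (Fin N) → EuclideanSpace ℝ (Fin N))
    (hψC1 : ContDiffOn ℝ 1 ψ E) (hψM : ∀ x ∈ E, ψ x ∈ M)
    (hψid : ∀ x ∈ M, ψ x = x)
    (R ε : ℝ) (hR : 0 < R) (hε : 0 < ε) :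
    ∃ δ > 0, ∀ x ∈ M, ∀ y ∈ M, ∀ z : EuclideanSpace ℝ (Fin N),
      ‖x‖ ≤ R → ‖y‖ ≤ R → ‖x - y‖ ≤ δ → ‖z‖ ≤ δ →
      x + z ∈ E ∧ y + z ∈ E ∧
      ‖ψ (x + z) - ψ (y + z) - (x - y)‖ ≤ ε * ‖x - y‖ :=
  stmt2_general M hMclosed E hEopen hME ψ hψC1 hψid R ε hε

end
end

section
/- Let f be a C^1 real-valued function on a convex open neighbourhood V of a closed hypercube C ⊆ ℝ^d with edge length l. Let ε, δ > 0 be such that l ≤ δ and ‖Df(u) − Df(u')‖₂ ≤ ε whenever u, u' ∈ V with ‖u − u'‖₂ ≤ √d·δ. Then the coordinatewise-affine interpolation Λ(f,C) of f on C satisfies Lip₂((Λ(f,C) − f)|_C) ≤ (1 + √d)·ε. -/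
/-!
Let `L = Df(y)`. Since `Λ` reproduces linear maps, `Λf - f = Λr - r` for `r = f - L`, and
`‖Dr‖ ≤ ε` on `C` because `diam C ≤ √d l ≤ √d δ`; so `r` is `ε`-Lipschitz on `C`.
The weights of `Λ(·,C)(x)` form a product of Bernoulli distributions with parameters
`(x_i - w_i)/l`. Moving `x` along coordinate `i` therefore changes `Λr(x)` by `|Δx_i|/l` times an
average of the increments of `r` along the edges of `C` in direction `i`, each at most `ε l`.
Hence `Λr` is `ε`-Lipschitz for the `ℓ¹` norm, so `ε√d`-Lipschitz for `ℓ²`, and the two bounds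
add up to `(1 + √d) ε`.
-/

open Set

noncomputable section

/-- The coordinatewise-affine interpolation `Λ(f,C)` of `f` on the hypercube with
vertices `v_γ = w + l•γ`, `γ ∈ {0,1}^d`. -/
def interp {d : ℕ} (w : EuclideanSpace ℝ (Fin d)) (l : ℝ)
    (f : EuclideanSpace ℝ (Fin d) → ℝ) (x : EuclideanSpace ℝ (Fin d)) : ℝ :=
  ∑ γ : Fin d → Bool,
    (∏ i, if γ i then (x i - w i) / l else 1 - (x i - w i) / l) *
      f (WithLp.toLp 2 (fun i => w i + if γ i then l else 0) : EuclideanSpace ℝ (Fin d))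

/-- The closed hypercube with corner `w` and edge length `l`. -/
def hcube {d : ℕ} (w : EuclideanSpace ℝ (Fin d)) (l : ℝ) : Set (EuclideanSpace ℝ (Fin d)) :=
  {x | ∀ i, x i ∈ Set.Icc (w i) (w i + l)}

def bernoulliWeight {ι : Type*} [Fintype ι] (t : ι → ℝ) (γ : ι → Bool) : ℝ :=
  ∏ i, if γ i then t i else 1 - t i

namespace bernoulliWeight

variable {ι : Type*} [Fintype ι] (t : ι → ℝ)

theorem nonneg (ht : ∀ i, t i ∈ Icc (0 : ℝ) 1) (γ : ι → Bool) : 0 ≤ bernoulliWeight t γ :=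
  Finset.prod_nonneg fun i _ => by
    obtain ⟨h0, h1⟩ := ht i
    split_ifs <;> linarith

variable [DecidableEq ι]

theorem sum_eq_one : ∑ γ, bernoulliWeight t γ = 1 := by
  simp only [bernoulliWeight, ← Fintype.prod_sum (fun i (b : Bool) => if b then t i else 1 - t i)]
  simp

theorem funSplitAt_symm (i : ι) (b : Bool) (δ : {j // j ≠ i} → Bool) :
    bernoulliWeight t ((Equiv.funSplitAt i Bool).symm (b, δ)) =
      (if b then t i else 1 - t i) * bernoulliWeight (fun j : {j // j ≠ i} => t j) δ := by
  rw [bernoulliWeight, Fintype.prod_eq_mul_prod_subtype_ne _ i]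
  simp only [Equiv.funSplitAt_symm_apply]
  congr 1
  exact Finset.prod_congr rfl fun j _ => by rw [dif_neg j.2]

theorem sum_mul_eq_sum_split (i : ι) (F : (ι → Bool) → ℝ) :
    ∑ γ, bernoulliWeight t γ * F γ =
      ∑ δ : {j // j ≠ i} → Bool, bernoulliWeight (fun j : {j // j ≠ i} => t j) δ *
        (t i * F ((Equiv.funSplitAt i Bool).symm (true, δ)) +
          (1 - t i) * F ((Equiv.funSplitAt i Bool).symm (false, δ))) := by
  rw [← (Equiv.funSplitAt i Bool).symm.sum_comp, Fintype.sum_prod_type, Fintype.sum_bool,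
    ← Finset.sum_add_distrib]
  refine Finset.sum_congr rfl fun δ _ => ?_
  simp only [funSplitAt_symm, if_true, Bool.false_eq_true, if_false]
  ring

theorem sum_mul_apply (i : ι) (h : Bool → ℝ) :
    ∑ γ, bernoulliWeight t γ * h (γ i) = t i * h true + (1 - t i) * h false := by
  simp [sum_mul_eq_sum_split t i, Equiv.funSplitAt_symm_apply, ← Finset.sum_mul, sum_eq_one]

theorem sum_sub_mul_of_eqOn_ne (t' : ι → ℝ) (i : ι) (htt' : ∀ j ≠ i, t j = t' j)
    (F : (ι → Bool) → ℝ) :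
    ∑ γ, (bernoulliWeight t γ - bernoulliWeight t' γ) * F γ =
      (t i - t' i) * ∑ δ : {j // j ≠ i} → Bool,
        bernoulliWeight (fun j : {j // j ≠ i} => t j) δ *
          (F ((Equiv.funSplitAt i Bool).symm (true, δ)) -
            F ((Equiv.funSplitAt i Bool).symm (false, δ))) := by
  have hrest : (fun j : {j // j ≠ i} => t' j) = fun j : {j // j ≠ i} => t j :=
    funext fun j => (htt' j j.2).symm
  rw [Finset.sum_congr rfl fun γ _ => sub_mul _ _ (F γ), Finset.sum_sub_distrib,
    sum_mul_eq_sum_split t i, sum_mul_eq_sum_split t' i, hrest, ← Finset.sum_sub_distrib,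
    Finset.mul_sum]
  exact Finset.sum_congr rfl fun δ _ => by ring

end bernoulliWeight

theorem abs_sub_le_mul_sum_of_abs_sub_le_coord {ι : Type*} [Fintype ι] [DecidableEq ι]
    {s : ι → Set ℝ} {φ : EuclideanSpace ℝ ι → ℝ} {C : ℝ}
    (hφ : ∀ i z z', (∀ j, z j ∈ s j) → (∀ j, z' j ∈ s j) → (∀ j ≠ i, z j = z' j) →
      |φ z - φ z'| ≤ C * |z i - z' i|)
    {x y : EuclideanSpace ℝ ι} (hx : ∀ j, x j ∈ s j) (hy : ∀ j, y j ∈ s j) :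
    |φ x - φ y| ≤ C * ∑ i, |x i - y i| := by
  suffices h : ∀ A : Finset ι, ∀ z : EuclideanSpace ℝ ι, (∀ j, z j ∈ s j) → (∀ j ∉ A, z j = y j) →
      |φ z - φ y| ≤ C * ∑ i ∈ A, |z i - y i| from h _ x hx (by simp)
  intro A
  induction A using Finset.induction_on with
  | empty =>
    intro z _ hzy
    have : z = y := PiLp.ext fun j => hzy j (Finset.notMem_empty j)
    simp [this]
  | insert i A hiA ih =>
    intro z hz hzy
    set z' : EuclideanSpace ℝ ι := WithLp.toLp 2 (Function.update z.ofLp i (y i))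
    have hz'_apply : ∀ j, z' j = if j = i then y j else z j := fun j => by
      by_cases hj : j = i <;> simp [z', Function.update, hj]
    have hz' : ∀ j, z' j ∈ s j := fun j => by
      rw [hz'_apply]; split_ifs; exacts [hy j, hz j]
    have hz'y : ∀ j ∉ A, z' j = y j := fun j hj => by
      rw [hz'_apply]; split_ifs with hji
      · rfl
      · exact hzy j (by simp [hji, hj])
    have hsum : ∑ j ∈ A, |z' j - y j| = ∑ j ∈ A, |z j - y j| :=
      Finset.sum_congr rfl fun j hj => by rw [hz'_apply, if_neg (ne_of_mem_of_not_mem hj hiA)]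
    calc |φ z - φ y| ≤ |φ z - φ z'| + |φ z' - φ y| := abs_sub_le _ _ _
      _ ≤ C * |z i - y i| + C * ∑ j ∈ A, |z j - y j| := by
        gcongr
        · simpa [hz'_apply] using hφ i z z' hz hz' fun j hj => by simp [hz'_apply, hj]
        · exact hsum ▸ ih z' hz' hz'y
      _ = C * ∑ j ∈ insert i A, |z j - y j| := by rw [Finset.sum_insert hiA, mul_add]

theorem sum_abs_sub_le_sqrt_card_mul_norm {ι : Type*} [Fintype ι] (x y : EuclideanSpace ℝ ι) :
    ∑ i, |x i - y i| ≤ √(Fintype.card ι) * ‖x - y‖ := by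
  simpa [EuclideanSpace.norm_eq, sq_abs] using
    Real.sum_mul_le_sqrt_mul_sqrt Finset.univ (fun _ => (1 : ℝ)) fun i => |x i - y i|

section Cube

variable {d : ℕ}

def cubeCoord (w : EuclideanSpace ℝ (Fin d)) (l : ℝ) (x : EuclideanSpace ℝ (Fin d)) (i : Fin d) :
    ℝ :=
  (x i - w i) / l

def cubeVertex (w : EuclideanSpace ℝ (Fin d)) (l : ℝ) (γ : Fin d → Bool) :
    EuclideanSpace ℝ (Fin d) :=
  WithLp.toLp 2 fun i => w i + if γ i then l else 0

theorem interp_eq_sum (w : EuclideanSpace ℝ (Fin d)) (l : ℝ) (f : EuclideanSpace ℝ (Fin d) → ℝ)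
    (x : EuclideanSpace ℝ (Fin d)) :
    interp w l f x = ∑ γ, bernoulliWeight (cubeCoord w l x) γ * f (cubeVertex w l γ) :=
  rfl

variable {w : EuclideanSpace ℝ (Fin d)} {l : ℝ}

theorem cubeCoord_mem_Icc (hl : 0 < l) {x : EuclideanSpace ℝ (Fin d)} (hx : x ∈ hcube w l)
    (i : Fin d) : cubeCoord w l x i ∈ Icc (0 : ℝ) 1 := by
  obtain ⟨h0, h1⟩ := hx i
  exact ⟨div_nonneg (by linarith) hl.le, (div_le_one hl).2 (by linarith)⟩

theorem cubeVertex_mem_hcube (hl : 0 ≤ l) (γ : Fin d → Bool) : cubeVertex w l γ ∈ hcube w l :=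
  fun i => by
    show w i + (if γ i then l else 0) ∈ Icc (w i) (w i + l)
    split_ifs <;> simp [hl]

theorem convex_hcube (w : EuclideanSpace ℝ (Fin d)) (l : ℝ) : Convex ℝ (hcube w l) :=
  fun _ hx _ hy _ _ ha hb hab i => convex_Icc _ _ (hx i) (hy i) ha hb hab

theorem norm_sub_le_of_mem_hcube (hl : 0 ≤ l) {x y : EuclideanSpace ℝ (Fin d)}
    (hx : x ∈ hcube w l) (hy : y ∈ hcube w l) : ‖x - y‖ ≤ √d * l := by
  have hcoord : ∀ i, ‖(x - y) i‖ ^ 2 ≤ l ^ 2 := fun i => by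
    obtain ⟨hx0, hx1⟩ := hx i
    obtain ⟨hy0, hy1⟩ := hy i
    rw [Real.norm_eq_abs, sq_abs, PiLp.sub_apply]
    exact sq_le_sq' (by linarith) (by linarith)
  calc ‖x - y‖ ≤ √(∑ _i : Fin d, l ^ 2) := (EuclideanSpace.norm_eq _).trans_le <|
        Real.sqrt_le_sqrt (Finset.sum_le_sum fun i _ => hcoord i)
    _ = √d * l := by simp [Real.sqrt_mul, Real.sqrt_sq hl]

theorem cubeVertex_funSplitAt_sub (w : EuclideanSpace ℝ (Fin d)) (l : ℝ) (i : Fin d)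
    (δ : {j // j ≠ i} → Bool) :
    cubeVertex w l ((Equiv.funSplitAt i Bool).symm (true, δ)) -
        cubeVertex w l ((Equiv.funSplitAt i Bool).symm (false, δ)) = PiLp.single 2 i l := by
  ext j
  by_cases hj : j = i <;> simp [cubeVertex, Equiv.funSplitAt_symm_apply, hj]

theorem sum_bernoulliWeight_smul_cubeVertex (hl : l ≠ 0) (x : EuclideanSpace ℝ (Fin d)) :
    ∑ γ, bernoulliWeight (cubeCoord w l x) γ • cubeVertex w l γ = x := by
  ext i
  simp only [WithLp.ofLp_sum, WithLp.ofLp_smul, Finset.sum_apply, Pi.smul_apply, smul_eq_mul]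
  have h := bernoulliWeight.sum_mul_apply (cubeCoord w l x) i fun b => w i + if b then l else 0
  simp only [cubeVertex, cubeCoord, if_true, Bool.false_eq_true, if_false] at h ⊢
  rw [h]
  field_simp
  ring

theorem interp_sub (w : EuclideanSpace ℝ (Fin d)) (l : ℝ) (f g : EuclideanSpace ℝ (Fin d) → ℝ)
    (x : EuclideanSpace ℝ (Fin d)) :
    interp w l (fun u => f u - g u) x = interp w l f x - interp w l g x := by
  simp only [interp_eq_sum, mul_sub, Finset.sum_sub_distrib]

theorem interp_clm (hl : l ≠ 0) (L : EuclideanSpace ℝ (Fin d) →L[ℝ] ℝ)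
    (x : EuclideanSpace ℝ (Fin d)) : interp w l L x = L x := by
  conv_rhs => rw [← sum_bernoulliWeight_smul_cubeVertex (w := w) hl x]
  simp only [interp_eq_sum, map_sum, map_smul, smul_eq_mul]

theorem abs_interp_sub_interp_le_of_eqOn_ne (hl : 0 < l) {g : EuclideanSpace ℝ (Fin d) → ℝ}
    {ε : ℝ} (hg : ∀ u ∈ hcube w l, ∀ u' ∈ hcube w l, |g u - g u'| ≤ ε * ‖u - u'‖) (i : Fin d)
    {z z' : EuclideanSpace ℝ (Fin d)} (hz : z ∈ hcube w l) (hzz' : ∀ j ≠ i, z j = z' j) :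
    |interp w l g z - interp w l g z'| ≤ ε * |z i - z' i| := by
  have hcoord : ∀ j ≠ i, cubeCoord w l z j = cubeCoord w l z' j := fun j hj => by
    simp only [cubeCoord, hzz' j hj]
  have hedge : ∀ δ : {j // j ≠ i} → Bool,
      |g (cubeVertex w l ((Equiv.funSplitAt i Bool).symm (true, δ))) -
        g (cubeVertex w l ((Equiv.funSplitAt i Bool).symm (false, δ)))| ≤ ε * l := fun δ => by
    have h := hg _ (cubeVertex_mem_hcube hl.le ((Equiv.funSplitAt i Bool).symm (true, δ))) _
      (cubeVertex_mem_hcube hl.le ((Equiv.funSplitAt i Bool).symm (false, δ)))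
    rwa [cubeVertex_funSplitAt_sub, PiLp.norm_single, Real.norm_eq_abs, abs_of_pos hl] at h
  have hweight := bernoulliWeight.nonneg _ fun j : {j // j ≠ i} => cubeCoord_mem_Icc hl hz j
  rw [interp_eq_sum, interp_eq_sum, ← Finset.sum_sub_distrib]
  simp only [← sub_mul]
  rw [bernoulliWeight.sum_sub_mul_of_eqOn_ne _ _ i hcoord, abs_mul]
  calc |cubeCoord w l z i - cubeCoord w l z' i| * |∑ δ, _|
      ≤ |z i - z' i| / l * ∑ δ : {j // j ≠ i} → Bool,
          bernoulliWeight (fun j : {j // j ≠ i} => cubeCoord w l z j) δ * (ε * l) := by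
        rw [cubeCoord, cubeCoord, ← sub_div, sub_sub_sub_cancel_right, abs_div, abs_of_pos hl]
        gcongr
        refine (Finset.abs_sum_le_sum_abs _ _).trans (Finset.sum_le_sum fun δ _ => ?_)
        rw [abs_mul, abs_of_nonneg (hweight δ)]
        exact mul_le_mul_of_nonneg_left (hedge δ) (hweight δ)
    _ = ε * |z i - z' i| := by
        rw [← Finset.sum_mul, bernoulliWeight.sum_eq_one]
        field_simp

theorem abs_interp_sub_interp_le (hl : 0 < l) {g : EuclideanSpace ℝ (Fin d) → ℝ} {ε : ℝ}
    (hε : 0 ≤ ε) (hg : ∀ u ∈ hcube w l, ∀ u' ∈ hcube w l, |g u - g u'| ≤ ε * ‖u - u'‖)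
    {x y : EuclideanSpace ℝ (Fin d)} (hx : x ∈ hcube w l) (hy : y ∈ hcube w l) :
    |interp w l g x - interp w l g y| ≤ ε * √d * ‖x - y‖ :=
  calc |interp w l g x - interp w l g y| ≤ ε * ∑ i, |x i - y i| :=
        abs_sub_le_mul_sum_of_abs_sub_le_coord
          (fun i _ _ hz _ hzz' => abs_interp_sub_interp_le_of_eqOn_ne hl hg i hz hzz') hx hy
    _ ≤ ε * √d * ‖x - y‖ := by
        rw [mul_assoc]
        gcongr
        simpa using sum_abs_sub_le_sqrt_card_mul_norm x y

end Cube

theorem stmt4_general {d : ℕ} (V : Set (EuclideanSpace ℝ (Fin d)))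
    (hVopen : IsOpen V)
    (w : EuclideanSpace ℝ (Fin d)) (l : ℝ) (hl : 0 < l) (hCV : hcube w l ⊆ V)
    (f : EuclideanSpace ℝ (Fin d) → ℝ) (hf : ContDiffOn ℝ 1 f V)
    (ε δ : ℝ) (hε : 0 < ε) (hlδ : l ≤ δ)
    (hDf : ∀ u ∈ V, ∀ u' ∈ V, ‖u - u'‖ ≤ Real.sqrt d * δ →
      ‖fderiv ℝ f u - fderiv ℝ f u'‖ ≤ ε) :
    ∀ x ∈ hcube w l, ∀ y ∈ hcube w l,
      |(interp w l f x - f x) - (interp w l f y - f y)|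
        ≤ (1 + Real.sqrt d) * ε * ‖x - y‖ := by
  intro x hx y hy
  set L := fderiv ℝ f y
  set r : EuclideanSpace ℝ (Fin d) → ℝ := fun u => f u - L u
  have hr : ∀ u ∈ hcube w l, ∀ u' ∈ hcube w l, |r u - r u'| ≤ ε * ‖u - u'‖ := by
    intro u hu u' hu'
    have hderiv : ∀ v ∈ hcube w l, HasFDerivWithinAt r (fderiv ℝ f v - L) (hcube w l) v :=
      fun v hv => (((hf.differentiableOn one_ne_zero v (hCV hv)).differentiableAt
        (hVopen.mem_nhds (hCV hv))).hasFDerivAt.sub L.hasFDerivAt).hasFDerivWithinAt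
    have hbound : ∀ v ∈ hcube w l, ‖fderiv ℝ f v - L‖ ≤ ε := fun v hv =>
      hDf v (hCV hv) y (hCV hy) ((norm_sub_le_of_mem_hcube hl.le hv hy).trans (by gcongr))
    simpa only [Real.norm_eq_abs] using
      (convex_hcube w l).norm_image_sub_le_of_norm_hasFDerivWithin_le hderiv hbound hu' hu
  have hdecomp : (interp w l f x - f x) - (interp w l f y - f y) =
      (interp w l r x - interp w l r y) - (r x - r y) := by
    simp only [r, interp_sub, interp_clm hl.ne']
    ring
  calc |(interp w l f x - f x) - (interp w l f y - f y)|
      ≤ |interp w l r x - interp w l r y| + |r x - r y| := hdecomp ▸ abs_sub _ _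
    _ ≤ ε * √d * ‖x - y‖ + ε * ‖x - y‖ :=
      add_le_add (abs_interp_sub_interp_le hl hε.le hr hx hy) (hr x hx y hy)
    _ = (1 + √d) * ε * ‖x - y‖ := by ring

theorem stmt4 {d : ℕ} (V : Set (EuclideanSpace ℝ (Fin d)))
    (hVopen : IsOpen V) (hVconv : Convex ℝ V)
    (w : EuclideanSpace ℝ (Fin d)) (l : ℝ) (hl : 0 < l) (hCV : hcube w l ⊆ V)
    (f : EuclideanSpace ℝ (Fin d) → ℝ) (hf : ContDiffOn ℝ 1 f V)
    (ε δ : ℝ) (hε : 0 < ε) (hδ : 0 < δ) (hlδ : l ≤ δ)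
    (hDf : ∀ u ∈ V, ∀ u' ∈ V, ‖u - u'‖ ≤ Real.sqrt d * δ →
      ‖fderiv ℝ f u - fderiv ℝ f u'‖ ≤ ε) :
    ∀ x ∈ hcube w l, ∀ y ∈ hcube w l,
      |(interp w l f x - f x) - (interp w l f y - f y)|
        ≤ (1 + Real.sqrt d) * ε * ‖x - y‖ :=
  stmt4_general V hVopen w l hl hCV f hf ε δ hε hlδ hDf

end
end

section
/- Let U ⊆ ℝ^N, let f: U → ℝ be Lipschitz, let ε > 0, let (U_i)_{i=1}^m be an open cover of U with a subordinate partition of unity (α_i)_{i=1}^m consisting of H-Lipschitz functions with values in [0,1], and let f_i: U_i → ℝ satisfy ‖f_i − f|_{U_i}‖_∞ < ε and Lip(f_i − f|_{U_i}) < ε for each i. Then g = Σ_{i=1}^m α_i f_i satisfies ‖g − f‖_∞ ≤ ε and Lip(g − f) ≤ (1 + mH)·ε. -/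
/-!
Since the weights sum to one, `g - f = ∑ αᵢ eᵢ` with `eᵢ = fᵢ - f`, and `αᵢ` vanishes wherever
`eᵢ` is not controlled. The sup bound is then a convex combination of numbers of size at most `ε`.
For the Lipschitz bound split `αᵢ(x) eᵢ(x) - αᵢ(y) eᵢ(y) = αᵢ(x) (eᵢ(x) - eᵢ(y)) + (αᵢ(x) - αᵢ(y)) eᵢ(y)`:
the first parts sum to at most `ε ‖x - y‖` because `∑ αᵢ(x) = 1`, and each of the `m` second
parts is at most `H ‖x - y‖ ⋅ ε`.
-/

namespace PartitionOfUnityApprox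

variable {ι : Type*} [Fintype ι]

theorem sum_mul_sub_eq_sum_mul_sub {w a : ι → ℝ} (hw : ∑ i, w i = 1) (c : ℝ) :
    ∑ i, w i * a i - c = ∑ i, w i * (a i - c) := by
  simp only [mul_sub, Finset.sum_sub_distrib, ← Finset.sum_mul, hw, one_mul]

theorem abs_sum_mul_le {w a : ι → ℝ} {ε : ℝ} (hw0 : ∀ i, 0 ≤ w i) (hw : ∑ i, w i = 1)
    (ha : ∀ i, w i ≠ 0 → |a i| ≤ ε) : |∑ i, w i * a i| ≤ ε := by
  have hterm : ∀ i, |w i * a i| ≤ w i * ε := fun i => by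
    rcases eq_or_ne (w i) 0 with h | h
    · simp [h]
    · rw [abs_mul, abs_of_nonneg (hw0 i)]
      exact mul_le_mul_of_nonneg_left (ha i h) (hw0 i)
  calc |∑ i, w i * a i| ≤ ∑ i, |w i * a i| := Finset.abs_sum_le_sum_abs _ _
    _ ≤ ∑ i, w i * ε := Finset.sum_le_sum fun i _ => hterm i
    _ = ε := by rw [← Finset.sum_mul, hw, one_mul]

/-- `a, b` are a weight at two points and `u, v` the error there; an error is only controlled
where its weight is nonzero. -/
theorem abs_mul_sub_mul_le {a b u v ε δ L : ℝ} (ha0 : 0 ≤ a) (hε : 0 ≤ ε) (hδ : 0 ≤ δ)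
    (hab : |a - b| ≤ L) (hu : a ≠ 0 → |u| ≤ ε) (hv : b ≠ 0 → |v| ≤ ε)
    (huv : a ≠ 0 → b ≠ 0 → |u - v| ≤ δ) : |a * u - b * v| ≤ a * δ + L * ε := by
  have hL : 0 ≤ L := (abs_nonneg _).trans hab
  have haδ : 0 ≤ a * δ := mul_nonneg ha0 hδ
  rcases eq_or_ne a 0 with rfl | ha
  · rcases eq_or_ne b 0 with rfl | hb
    · simpa using mul_nonneg hL hε
    · calc |0 * u - b * v| = |0 - b| * |v| := by rw [← abs_mul]; ring_nf
        _ ≤ L * ε := mul_le_mul hab (hv hb) (abs_nonneg _) hL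
        _ = 0 * δ + L * ε := by ring
  · rcases eq_or_ne b 0 with rfl | hb
    · calc |a * u - 0 * v| = |a - 0| * |u| := by rw [← abs_mul]; ring_nf
        _ ≤ L * ε := mul_le_mul hab (hu ha) (abs_nonneg _) hL
        _ ≤ a * δ + L * ε := le_add_of_nonneg_left haδ
    · calc |a * u - b * v| = |a * (u - v) + (a - b) * v| := by ring_nf
        _ ≤ |a * (u - v)| + |(a - b) * v| := abs_add_le _ _
        _ = a * |u - v| + |a - b| * |v| := by rw [abs_mul, abs_mul, abs_of_nonneg ha0]
        _ ≤ a * δ + L * ε := add_le_add (mul_le_mul_of_nonneg_left (huv ha hb) ha0)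
            (mul_le_mul hab (hv hb) (abs_nonneg _) hL)

theorem abs_sum_mul_sub_sum_mul_le {w w' u v : ι → ℝ} {ε δ L : ℝ} (hw0 : ∀ i, 0 ≤ w i)
    (hw : ∑ i, w i = 1) (hε : 0 ≤ ε) (hδ : 0 ≤ δ) (hww' : ∀ i, |w i - w' i| ≤ L)
    (hu : ∀ i, w i ≠ 0 → |u i| ≤ ε) (hv : ∀ i, w' i ≠ 0 → |v i| ≤ ε)
    (huv : ∀ i, w i ≠ 0 → w' i ≠ 0 → |u i - v i| ≤ δ) :
    |∑ i, w i * u i - ∑ i, w' i * v i| ≤ δ + Fintype.card ι * L * ε := by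
  rw [← Finset.sum_sub_distrib]
  calc |∑ i, (w i * u i - w' i * v i)| ≤ ∑ i, |w i * u i - w' i * v i| :=
        Finset.abs_sum_le_sum_abs _ _
    _ ≤ ∑ i, (w i * δ + L * ε) := Finset.sum_le_sum fun i _ =>
        abs_mul_sub_mul_le (hw0 i) hε hδ (hww' i) (hu i) (hv i) (huv i)
    _ = δ + Fintype.card ι * L * ε := by
        rw [Finset.sum_add_distrib, ← Finset.sum_mul, hw, Finset.sum_const, Finset.card_univ,
          nsmul_eq_mul]
        ring

end PartitionOfUnityApprox

open PartitionOfUnityApprox in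
theorem stmt7_general {E : Type*} [NormedAddCommGroup E]
    (U : Set E) (f : E → ℝ)
    (ε H : ℝ) (hε : 0 < ε)
    (m : ℕ) (Ui : Fin m → Set E)
    (α : Fin m → E → ℝ)
    (hα01 : ∀ i, ∀ x ∈ U, α i x ∈ Set.Icc (0 : ℝ) 1)
    (hαsum : ∀ x ∈ U, ∑ i, α i x = 1)
    (hαsupp : ∀ i, ∀ x ∈ U, x ∉ Ui i → α i x = 0)
    (hαLip : ∀ i, ∀ x ∈ U, ∀ y ∈ U, |α i x - α i y| ≤ H * ‖x - y‖)
    (fi : Fin m → E → ℝ)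
    (hfisup : ∀ i, ∀ x ∈ U ∩ Ui i, |fi i x - f x| ≤ ε)
    (hfiLip : ∀ i, ∀ x ∈ U ∩ Ui i, ∀ y ∈ U ∩ Ui i,
      |(fi i x - f x) - (fi i y - f y)| ≤ ε * ‖x - y‖) :
    (∀ x ∈ U, |(∑ i, α i x * fi i x) - f x| ≤ ε) ∧
    (∀ x ∈ U, ∀ y ∈ U,
      |((∑ i, α i x * fi i x) - f x) - ((∑ i, α i y * fi i y) - f y)|
        ≤ (1 + m * H) * ε * ‖x - y‖) := by
  have hmem : ∀ i, ∀ x ∈ U, α i x ≠ 0 → x ∈ U ∩ Ui i := fun i x hx hα =>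
    ⟨hx, by_contra fun hxi => hα (hαsupp i x hx hxi)⟩
  refine ⟨fun x hx => ?_, fun x hx y hy => ?_⟩
  · rw [sum_mul_sub_eq_sum_mul_sub (hαsum x hx)]
    exact abs_sum_mul_le (fun i => (hα01 i x hx).1) (hαsum x hx)
      fun i h => hfisup i x (hmem i x hx h)
  · rw [sum_mul_sub_eq_sum_mul_sub (hαsum x hx), sum_mul_sub_eq_sum_mul_sub (hαsum y hy)]
    calc _ ≤ ε * ‖x - y‖ + Fintype.card (Fin m) * (H * ‖x - y‖) * ε :=
          abs_sum_mul_sub_sum_mul_le (fun i => (hα01 i x hx).1) (hαsum x hx) hε.le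
            (by positivity) (fun i => hαLip i x hx y hy) (fun i h => hfisup i x (hmem i x hx h))
            (fun i h => hfisup i y (hmem i y hy h))
            fun i hx' hy' => hfiLip i x (hmem i x hx hx') y (hmem i y hy hy')
      _ = (1 + m * H) * ε * ‖x - y‖ := by rw [Fintype.card_fin]; ring

theorem stmt7 {E : Type*} [NormedAddCommGroup E] [NormedSpace ℝ E]
    [FiniteDimensional ℝ E]
    (U : Set E) (f : E → ℝ) (Lf : ℝ) (hLf : 0 ≤ Lf)
    (hfLip : ∀ x ∈ U, ∀ y ∈ U, |f x - f y| ≤ Lf * ‖x - y‖)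
    (ε H : ℝ) (hε : 0 < ε) (hH : 0 < H)
    (m : ℕ) (Ui : Fin m → Set E) (hUopen : ∀ i, IsOpen (Ui i))
    (hUcover : U ⊆ ⋃ i, Ui i)
    (α : Fin m → E → ℝ)
    (hα01 : ∀ i, ∀ x ∈ U, α i x ∈ Set.Icc (0 : ℝ) 1)
    (hαsum : ∀ x ∈ U, ∑ i, α i x = 1)
    (hαsupp : ∀ i, ∀ x ∈ U, x ∉ Ui i → α i x = 0)
    (hαLip : ∀ i, ∀ x ∈ U, ∀ y ∈ U, |α i x - α i y| ≤ H * ‖x - y‖)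
    (fi : Fin m → E → ℝ)
    (hfisup : ∀ i, ∀ x ∈ U ∩ Ui i, |fi i x - f x| ≤ ε)
    (hfiLip : ∀ i, ∀ x ∈ U ∩ Ui i, ∀ y ∈ U ∩ Ui i,
      |(fi i x - f x) - (fi i y - f y)| ≤ ε * ‖x - y‖) :
    (∀ x ∈ U, |(∑ i, α i x * fi i x) - f x| ≤ ε) ∧
    (∀ x ∈ U, ∀ y ∈ U,
      |((∑ i, α i x * fi i x) - f x) - ((∑ i, α i y * fi i y) - f y)|
        ≤ (1 + m * H) * ε * ‖x - y‖) :=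
  stmt7_general U f ε H hε m Ui α hα01 hαsum hαsupp hαLip fi hfisup hfiLip
end

section
/- Let ‖·‖ be a norm on ℝ^N with K⁻¹‖·‖₂ ≤ ‖·‖ ≤ K‖·‖₂ for some K ≥ 1, let M ⊆ ℝ^N contain 0, let R > 1, and define μ: [0,∞) → [0,1] by μ(t) = 1 for t ≤ R, μ(t) = (log R)⁻¹(2 log R − log t) for R ≤ t ≤ R², and μ(t) = 0 for t ≥ R². For f: M ∩ B_{R²} → ℝ Lipschitz (w.r.t. ‖·‖) with f(0) = 0, define Φ(f)(x) = μ(‖x‖₂)·f(x) for x ∈ M ∩ B_{R²} and Φ(f)(x) = 0 for x ∈ M \ B_{R²}. Then Φ(f) is Lipschitz on M with Lip(Φ(f)) ≤ (1 + K²/log R)·Lip(f). -/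
/-!
On `M`, `Φf x = μ ‖x‖ * f x` because `μ` vanishes beyond `R²`. For `‖x‖ ≤ ‖y‖`,
`Φf x - Φf y = μ ‖y‖ * (f x - f y) + (μ ‖x‖ - μ ‖y‖) * f x`. The first term is at most
`Lf * n (x - y)` since `0 ≤ μ ≤ 1`. For the second, `μ t` is `2 - log t / log R` clamped to
`[0, 1]`, so `|μ s - μ t| * s ≤ (log t - log s) * s / log R ≤ (t - s) / log R`, while
`|f x| ≤ K * Lf * ‖x‖` because `f 0 = 0`; comparing `n` with the Euclidean norm twice gives `K²`.
-/

open Set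

noncomputable section

open Real

def logCutoff (R t : ℝ) : ℝ :=
  if t ≤ R then 1 else if t ≤ R ^ 2 then (log R)⁻¹ * (2 * log R - log t) else 0

section LogCutoff

variable {R s t : ℝ}

lemma logCutoff_eq_max_min (hR : 1 < R) (ht : 0 < t) :
    logCutoff R t = max (min (2 - log t / log R) 1) 0 := by
  have hlogR : 0 < log R := log_pos hR
  have hle_R : t ≤ R ↔ log t / log R ≤ 1 := by
    rw [div_le_one hlogR, log_le_log_iff ht (by linarith)]
  have hle_sq : t ≤ R ^ 2 ↔ log t / log R ≤ 2 := by
    rw [div_le_iff₀ hlogR, ← log_rpow (by linarith), log_le_log_iff ht (by positivity)]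
    norm_cast
  have hmid : (log R)⁻¹ * (2 * log R - log t) = 2 - log t / log R := by
    field_simp
  rw [logCutoff, hmid]
  split_ifs with h₁ h₂
  · rw [min_eq_right (by linarith [hle_R.1 h₁]), max_eq_left zero_le_one]
  · rw [min_eq_left (by linarith [hle_R.not.1 h₁]), max_eq_left (by linarith [hle_sq.1 h₂])]
  · rw [max_eq_right (min_le_of_left_le (by linarith [hle_sq.not.1 h₂]))]

lemma abs_logCutoff_le_one (hR : 1 < R) (t : ℝ) : |logCutoff R t| ≤ 1 := by
  rcases le_or_gt t 0 with ht | ht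
  · rw [logCutoff, if_pos (by linarith), abs_one]
  · rw [logCutoff_eq_max_min hR ht, abs_of_nonneg (le_max_right _ _)]
    exact max_le (min_le_right _ _) zero_le_one

lemma logCutoff_of_sq_lt (hR : 1 ≤ R) (ht : R ^ 2 < t) : logCutoff R t = 0 := by
  have hRt : R < t := by nlinarith
  rw [logCutoff, if_neg hRt.not_ge, if_neg ht.not_ge]

lemma log_sub_log_le_div (hs : 0 < s) (ht : 0 < t) : log t - log s ≤ (t - s) / s := by
  rw [← log_div ht.ne' hs.ne', sub_div, div_self hs.ne']
  exact log_le_sub_one_of_pos (div_pos ht hs)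

lemma abs_logCutoff_sub_mul_le (hR : 1 < R) (hs : 0 ≤ s) (hst : s ≤ t) :
    |logCutoff R s - logCutoff R t| * s ≤ (t - s) / log R := by
  have hlogR : 0 < log R := log_pos hR
  rcases hs.eq_or_lt with rfl | hs
  · rw [mul_zero]
    exact div_nonneg (by linarith) hlogR.le
  have ht := hs.trans_le hst
  calc |logCutoff R s - logCutoff R t| * s
      ≤ |(2 - log s / log R) - (2 - log t / log R)| * s := by
        rw [logCutoff_eq_max_min hR hs, logCutoff_eq_max_min hR ht]
        refine mul_le_mul_of_nonneg_right ((abs_max_sub_max_le_abs _ _ (0 : ℝ)).trans ?_) hs.le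
        simpa using abs_min_sub_min_le_max (2 - log s / log R) 1 (2 - log t / log R) 1
    _ = (log t - log s) * s / log R := by
        rw [abs_of_nonneg (by rw [sub_sub_sub_cancel_left, ← sub_div]
                              exact div_nonneg (by linarith [log_le_log hs hst]) hlogR.le)]
        ring
    _ ≤ (t - s) / log R := by
        gcongr
        calc (log t - log s) * s ≤ (t - s) / s * s := by gcongr; exact log_sub_log_le_div hs ht
          _ = t - s := div_mul_cancel₀ _ hs.ne'

end LogCutoff

lemma abs_mul_sub_mul_le (a b u v : ℝ) : |a * u - b * v| ≤ |b| * |u - v| + |a - b| * |u| := by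
  calc |a * u - b * v| = |b * (u - v) + (a - b) * u| := by ring_nf
    _ ≤ |b| * |u - v| + |a - b| * |u| := by
        rw [← abs_mul, ← abs_mul]; exact abs_add_le _ _

/-- `s ≤ t` are the norms of two points, `u` and `v` the values of `f` there, and `D` their
distance. -/
lemma abs_logCutoff_mul_sub_mul_le {R K L D s t u v : ℝ} (hR : 1 < R) (hK : 0 ≤ K)
    (hL : 0 ≤ L) (hD : 0 ≤ D) (hs : 0 ≤ s) (hst : s ≤ t) (hts : t - s ≤ K * D)
    (huv : t ≤ R ^ 2 → |u - v| ≤ L * D) (hu : s ≤ R ^ 2 → |u| ≤ K * L * s) :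
    |logCutoff R s * u - logCutoff R t * v| ≤ (1 + K ^ 2 / log R) * L * D := by
  have hlogR : 0 < log R := log_pos hR
  have hvar : |logCutoff R t| * |u - v| ≤ L * D := by
    rcases le_or_gt t (R ^ 2) with ht | ht
    · simpa using mul_le_mul (abs_logCutoff_le_one hR t) (huv ht) (abs_nonneg _) zero_le_one
    · rw [logCutoff_of_sq_lt hR.le ht, abs_zero, zero_mul]; positivity
  have hcut : |logCutoff R s - logCutoff R t| * |u| ≤ K ^ 2 / log R * (L * D) := by
    rcases le_or_gt s (R ^ 2) with hs' | hs'
    · calc |logCutoff R s - logCutoff R t| * |u|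
          ≤ |logCutoff R s - logCutoff R t| * (K * L * s) := by gcongr; exact hu hs'
        _ = K * L * (|logCutoff R s - logCutoff R t| * s) := by ring
        _ ≤ K * L * ((K * D) / log R) := by
            gcongr; exact (abs_logCutoff_sub_mul_le hR hs hst).trans (by gcongr)
        _ = K ^ 2 / log R * (L * D) := by ring
    · rw [logCutoff_of_sq_lt hR.le hs', logCutoff_of_sq_lt hR.le (hs'.trans_le hst),
        sub_zero, abs_zero, zero_mul]
      positivity
  calc |logCutoff R s * u - logCutoff R t * v|
      ≤ |logCutoff R t| * |u - v| + |logCutoff R s - logCutoff R t| * |u| :=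
        abs_mul_sub_mul_le _ _ _ _
    _ ≤ L * D + K ^ 2 / log R * (L * D) := add_le_add hvar hcut
    _ = (1 + K ^ 2 / log R) * L * D := by ring

theorem stmt8_general {N : ℕ} (n : EuclideanSpace ℝ (Fin N) → ℝ)
    (K : ℝ) (hK : 1 ≤ K)
    (hK1 : ∀ x, K⁻¹ * ‖x‖ ≤ n x) (hK2 : ∀ x, n x ≤ K * ‖x‖)
    (M : Set (EuclideanSpace ℝ (Fin N))) (h0M : (0 : EuclideanSpace ℝ (Fin N)) ∈ M)
    (R : ℝ) (hR : 1 < R)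
    (μ : ℝ → ℝ)
    (hμ : ∀ t, μ t =
      if t ≤ R then 1
      else if t ≤ R ^ 2 then (Real.log R)⁻¹ * (2 * Real.log R - Real.log t)
      else 0)
    (f : EuclideanSpace ℝ (Fin N) → ℝ) (hf0 : f 0 = 0)
    (Lf : ℝ) (hLf : 0 ≤ Lf)
    (hfLip : ∀ x ∈ M ∩ Metric.closedBall 0 (R ^ 2),
      ∀ y ∈ M ∩ Metric.closedBall 0 (R ^ 2), |f x - f y| ≤ Lf * n (x - y))
    (Φf : EuclideanSpace ℝ (Fin N) → ℝ)
    (hΦf : ∀ x ∈ M, Φf x = if ‖x‖ ≤ R ^ 2 then μ ‖x‖ * f x else 0) :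
    ∀ x ∈ M, ∀ y ∈ M, |Φf x - Φf y| ≤ (1 + K ^ 2 / Real.log R) * Lf * n (x - y) := by
  obtain rfl : μ = logCutoff R := funext hμ
  have hK0 : 0 < K := zero_lt_one.trans_le hK
  have hΦ : ∀ x ∈ M, Φf x = logCutoff R ‖x‖ * f x := fun x hx => by
    rw [hΦf x hx]
    split_ifs with h
    · rfl
    · rw [logCutoff_of_sq_lt hR.le (not_le.1 h), zero_mul]
  have hmem : ∀ x ∈ M, ‖x‖ ≤ R ^ 2 → x ∈ M ∩ Metric.closedBall 0 (R ^ 2) :=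
    fun x hx hxR => ⟨hx, mem_closedBall_zero_iff.2 hxR⟩
  have hf : ∀ x ∈ M, ‖x‖ ≤ R ^ 2 → |f x| ≤ K * Lf * ‖x‖ := fun x hx hxR => by
    have h := hfLip x (hmem x hx hxR) 0 (hmem 0 h0M (by simpa using sq_nonneg R))
    rw [hf0, sub_zero, sub_zero] at h
    linarith [mul_le_mul_of_nonneg_left (hK2 x) hLf]
  have hnorm : ∀ z, ‖z‖ ≤ K * n z := fun z => (inv_mul_le_iff₀ hK0).1 (hK1 z)
  have hn : ∀ z, 0 ≤ n z := fun z =>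
    (mul_nonneg_iff_of_pos_left hK0).1 ((norm_nonneg z).trans (hnorm z))
  have hgap : ∀ x y, |‖x‖ - ‖y‖| ≤ K * n (x - y) := fun x y =>
    (abs_norm_sub_norm_le x y).trans (hnorm _)
  intro x hx y hy
  rw [hΦ x hx, hΦ y hy]
  rcases le_total ‖x‖ ‖y‖ with hxy | hyx
  · exact abs_logCutoff_mul_sub_mul_le hR hK0.le hLf (hn _) (norm_nonneg x) hxy
      (abs_sub_le_iff.1 (hgap x y)).2
      (fun hyR => hfLip x (hmem x hx (hxy.trans hyR)) y (hmem y hy hyR)) (hf x hx)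
  · rw [abs_sub_comm]
    refine abs_logCutoff_mul_sub_mul_le hR hK0.le hLf (hn _) (norm_nonneg y) hyx
      (abs_sub_le_iff.1 (hgap x y)).1 (fun hxR => ?_) (hf y hy)
    rw [abs_sub_comm]
    exact hfLip x (hmem x hx hxR) y (hmem y hy (hyx.trans hxR))

theorem stmt8 {N : ℕ} (n : EuclideanSpace ℝ (Fin N) → ℝ)
    (hn_add : ∀ x y, n (x + y) ≤ n x + n y)
    (hn_smul : ∀ (c : ℝ) x, n (c • x) = |c| * n x)
    (hn_pos : ∀ x, x ≠ 0 → 0 < n x)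
    (K : ℝ) (hK : 1 ≤ K)
    (hK1 : ∀ x, K⁻¹ * ‖x‖ ≤ n x) (hK2 : ∀ x, n x ≤ K * ‖x‖)
    (M : Set (EuclideanSpace ℝ (Fin N))) (h0M : (0 : EuclideanSpace ℝ (Fin N)) ∈ M)
    (R : ℝ) (hR : 1 < R)
    (μ : ℝ → ℝ)
    (hμ : ∀ t, μ t =
      if t ≤ R then 1
      else if t ≤ R ^ 2 then (Real.log R)⁻¹ * (2 * Real.log R - Real.log t)
      else 0)
    (f : EuclideanSpace ℝ (Fin N) → ℝ) (hf0 : f 0 = 0)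
    (Lf : ℝ) (hLf : 0 ≤ Lf)
    (hfLip : ∀ x ∈ M ∩ Metric.closedBall 0 (R ^ 2),
      ∀ y ∈ M ∩ Metric.closedBall 0 (R ^ 2), |f x - f y| ≤ Lf * n (x - y))
    (Φf : EuclideanSpace ℝ (Fin N) → ℝ)
    (hΦf : ∀ x ∈ M, Φf x = if ‖x‖ ≤ R ^ 2 then μ ‖x‖ * f x else 0) :
    ∀ x ∈ M, ∀ y ∈ M, |Φf x - Φf y| ≤ (1 + K ^ 2 / Real.log R) * Lf * n (x - y) :=
  stmt8_general n K hK hK1 hK2 M h0M R hR μ hμ f hf0 Lf hLf hfLip Φf hΦf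

end
end

section
/- Let ‖·‖' be a norm on ℝ³ such that the subspace ℝ² × {0} is not the range of any norm-one linear projection. Let C = [0,1]² × {0} and D = [−1/2, 3/2]² × {0}. Then it is NOT the case that for every ξ > 0 there exist an open set U ⊆ ℝ³ containing C and a map Ψ: U → D with Lip(Ψ) ≤ 1 + ξ (w.r.t. ‖·‖') and ‖Ψ(x) − x‖' ≤ ξ for all x ∈ U. -/
/-!
If the maps `Ψ` existed for `ξ = 1/(k+1)`, extend each to a Lipschitz map `F` of `ℝ³` (all norms
on `ℝ³` being equivalent) and average its derivative, which exists a.e. by Rademacher's theorem,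
over a thin box `Q = [0,1]² × [0,δ] ⊆ U`. A.e. on `Q` the derivative has `‖·‖'`-operator norm at
most `1 + ξ` and values in `ℝ² × {0}`, and averaging preserves both properties (closed convex
conditions). Writing `∂ᵢF` as a limit of difference quotients, the average of `∂ᵢF - eᵢ` over `Q`
only sees `F - id` on the symmetric difference of `Q` and its translates, hence is `O(ξ)` for
`i = 0, 1`. A limit point of these averaged derivatives is a norm-one projection onto
`ℝ² × {0}`.
-/

open MeasureTheory Filter Set Metric Topology
open scoped NNReal ENNReal

namespace Seminorm

variable {E : Type*} [NormedAddCommGroup E] [NormedSpace ℝ E] [FiniteDimensional ℝ E]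

theorem continuous_of_finiteDimensional (p : Seminorm ℝ E) : Continuous p :=
  continuousOn_univ.1 (p.convexOn.continuousOn isOpen_univ)

theorem exists_pos_mul_norm_le [Nontrivial E] (p : Seminorm ℝ E) (hp : ∀ x, x ≠ 0 → 0 < p x) :
    ∃ c > 0, ∀ x, c * ‖x‖ ≤ p x := by
  obtain ⟨z, hz, hmin⟩ := (isCompact_sphere (0 : E) 1).exists_isMinOn
    (NormedSpace.sphere_nonempty.2 zero_le_one) p.continuous_of_finiteDimensional.continuousOn
  have hz0 : z ≠ 0 := ne_zero_of_mem_unit_sphere ⟨z, hz⟩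
  refine ⟨p z, hp z hz0, fun x => ?_⟩
  rcases eq_or_ne x 0 with rfl | hx
  · simp
  have hx' : 0 < ‖x‖ := norm_pos_iff.2 hx
  have hmem : ‖x‖⁻¹ • x ∈ sphere (0 : E) 1 := by
    simp [norm_smul, hx'.ne']
  have : p z ≤ p (‖x‖⁻¹ • x) := hmin hmem
  rw [map_smul_eq_mul, norm_inv, norm_norm] at this
  rwa [le_inv_mul_iff₀ hx', mul_comm] at this

end Seminorm

theorem lipschitzOnWith_of_seminorm_le {E F : Type*} [NormedAddCommGroup E] [NormedSpace ℝ E]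
    [NormedAddCommGroup F] [NormedSpace ℝ F] (p : Seminorm ℝ E) (q : Seminorm ℝ F)
    {c C L : ℝ} (hc : 0 < c) (hC : 0 ≤ C) (hL : 0 ≤ L) (hqc : ∀ y, c * ‖y‖ ≤ q y)
    (hpC : ∀ x, p x ≤ C * ‖x‖) {f : E → F} {s : Set E}
    (hf : ∀ x ∈ s, ∀ y ∈ s, q (f x - f y) ≤ L * p (x - y)) :
    LipschitzOnWith (L * C / c).toNNReal f s := by
  refine .of_dist_le_mul fun x hx y hy => ?_
  rw [dist_eq_norm, dist_eq_norm, Real.coe_toNNReal _ (by positivity), div_mul_eq_mul_div,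
    le_div_iff₀' hc]
  calc c * ‖f x - f y‖ ≤ q (f x - f y) := hqc _
    _ ≤ L * p (x - y) := hf x hx y hy
    _ ≤ L * (C * ‖x - y‖) := by gcongr; exact hpC _
    _ = L * C * ‖x - y‖ := by ring

section Deriv

variable {E F G : Type*} [NormedAddCommGroup E] [NormedSpace ℝ E] [NormedAddCommGroup F]
  [NormedSpace ℝ F] [NormedAddCommGroup G] [NormedSpace ℝ G] {f : E → F} {f' : E →L[ℝ] F} {x : E}

theorem HasFDerivAt.seminorm_apply_le (p : Seminorm ℝ E) (q : Seminorm ℝ F) (hq : Continuous q)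
    (hf : HasFDerivAt f f' x) {L : ℝ} (hL : ∀ᶠ y in 𝓝 x, q (f y - f x) ≤ L * p (y - x))
    (v : E) : q (f' v) ≤ L * p v := by
  have hline : Tendsto (fun t : ℝ => x + t • v) (𝓝[>] 0) (𝓝 x) :=
    tendsto_nhdsWithin_of_tendsto_nhds
      ((continuous_const.add (continuous_id.smul continuous_const)).tendsto' 0 x (by simp))
  refine le_of_tendsto ((hq.tendsto _).comp (hf.hasLineDerivAt v).tendsto_slope_zero_right) ?_
  filter_upwards [hline.eventually hL, self_mem_nhdsWithin] with t ht (htpos : 0 < t)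
  rw [add_sub_cancel_left, map_smul_eq_mul, Real.norm_of_nonneg htpos.le] at ht
  rw [Function.comp_apply, map_smul_eq_mul, norm_inv, Real.norm_of_nonneg htpos.le,
    inv_mul_le_iff₀ htpos]
  linarith

theorem HasFDerivAt.apply_eq_zero_of_eventually (ℓ : F →L[ℝ] G) (hf : HasFDerivAt f f' x)
    (h : ∀ᶠ y in 𝓝 x, ℓ (f y) = 0) (v : E) : ℓ (f' v) = 0 := by
  have hzero : HasFDerivAt (ℓ ∘ f) (0 : E →L[ℝ] G) x :=
    (hasFDerivAt_const 0 x).congr_of_eventuallyEq h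
  simpa using congr($((ℓ.hasFDerivAt.comp x hf).unique hzero) v)

theorem LipschitzWith.norm_slope_le {K : ℝ≥0} (hf : LipschitzWith K f) (x v : E) (t : ℝ) :
    ‖t⁻¹ • (f (x + t • v) - f x)‖ ≤ K * ‖v‖ := by
  rcases eq_or_ne t 0 with rfl | ht
  · simp only [inv_zero, zero_smul, norm_zero]; positivity
  calc ‖t⁻¹ • (f (x + t • v) - f x)‖ ≤ ‖t‖⁻¹ * (K * ‖t • v‖) := by
        rw [norm_smul, norm_inv]
        gcongr
        simpa using hf.norm_sub_le (x + t • v) x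
    _ = K * ‖v‖ := by
        rw [norm_smul]
        field_simp [norm_ne_zero_iff.2 ht]

end Deriv

theorem norm_setIntegral_sub_setIntegral_le {α G : Type*} [MeasurableSpace α]
    [NormedAddCommGroup G] [NormedSpace ℝ G] {μ : Measure α} {s t : Set α}
    (hs : MeasurableSet s) (ht : MeasurableSet t) (hsfin : μ s ≠ ∞) (htfin : μ t ≠ ∞)
    {f : α → G} (hf : IntegrableOn f (s ∪ t) μ) {η : ℝ} (hη : ∀ x ∈ s ∪ t, ‖f x‖ ≤ η) :
    ‖∫ x in t, f x ∂μ - ∫ x in s, f x ∂μ‖ ≤ η * (μ.real (t \ s) + μ.real (s \ t)) := by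
  rw [← integral_inter_add_sdiff hs (hf.mono_set subset_union_right),
    ← integral_inter_add_sdiff ht (hf.mono_set subset_union_left), inter_comm,
    add_sub_add_left_eq_sub, mul_add]
  refine (norm_sub_le _ _).trans (add_le_add ?_ ?_)
  · exact norm_setIntegral_le_of_norm_le_const ((measure_mono sdiff_subset).trans_lt htfin.lt_top)
      fun x hx => hη x (.inr hx.1)
  · exact norm_setIntegral_le_of_norm_le_const ((measure_mono sdiff_subset).trans_lt hsfin.lt_top)
      fun x hx => hη x (.inl hx.1)

namespace LipschitzWith

variable {E F : Type*} [NormedAddCommGroup E] [NormedSpace ℝ E] [FiniteDimensional ℝ E]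
  [MeasurableSpace E] [BorelSpace E] [NormedAddCommGroup F] [NormedSpace ℝ F]
  [FiniteDimensional ℝ F] {G : Type*} [NormedAddCommGroup G] [NormedSpace ℝ G]
  {μ : Measure E} [μ.IsAddHaarMeasure] {f : E → F} {K : ℝ≥0}

theorem integrable_fderiv (hf : LipschitzWith K f) (ν : Measure E) [IsFiniteMeasure ν] :
    Integrable (fderiv ℝ f) ν :=
  .of_bound (measurable_fderiv ℝ f).aestronglyMeasurable K
    (ae_of_all _ fun _ => norm_fderiv_le_of_lipschitz ℝ hf)

theorem average_fderiv_apply (hf : LipschitzWith K f) (ν : Measure E) [IsFiniteMeasure ν]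
    (v : E) : (⨍ x, fderiv ℝ f x ∂ν) v = ⨍ x, fderiv ℝ f x v ∂ν := by
  rw [average_eq, average_eq, smul_apply,
    ContinuousLinearMap.integral_apply (hf.integrable_fderiv ν)]

theorem setAverage_fderiv_apply_mem (hf : LipschitzWith K f) {s : Set E} (hs : MeasurableSet s)
    (hs0 : μ s ≠ 0) (hsfin : μ s ≠ ∞) {t : Set F} (ht : Convex ℝ t) (htc : IsClosed t) (v : E)
    (h : ∀ x ∈ s, DifferentiableAt ℝ f x → fderiv ℝ f x v ∈ t) :
    (⨍ x in s, fderiv ℝ f x ∂μ) v ∈ t := by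
  have : IsFiniteMeasure (μ.restrict s) := isFiniteMeasure_restrict.2 hsfin
  rw [hf.average_fderiv_apply]
  refine ht.set_average_mem htc hs0 hsfin ?_
    ((ContinuousLinearMap.apply ℝ F v).integrable_comp (hf.integrable_fderiv _))
  filter_upwards [ae_restrict_mem hs, ae_restrict_of_ae (hf.ae_differentiableAt (μ := μ))]
    with x hxs hx using h x hxs hx

theorem seminorm_setAverage_fderiv_apply_le (hf : LipschitzWith K f) {s U : Set E}
    (hs : MeasurableSet s) (hs0 : μ s ≠ 0) (hsfin : μ s ≠ ∞) (hU : IsOpen U) (hsU : s ⊆ U)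
    (p : Seminorm ℝ E) (q : Seminorm ℝ F) (hq : Continuous q) {L : ℝ}
    (hfL : ∀ x ∈ U, ∀ y ∈ U, q (f y - f x) ≤ L * p (y - x)) (v : E) :
    q ((⨍ x in s, fderiv ℝ f x ∂μ) v) ≤ L * p v := by
  have hclosed : IsClosed (q.closedBall 0 (L * p v)) := by
    rw [q.closedBall_zero_eq]
    exact isClosed_le hq continuous_const
  refine q.mem_closedBall_zero.1 <| hf.setAverage_fderiv_apply_mem hs hs0 hsfin
    (q.convex_closedBall 0 _) hclosed v fun x hx hdiff => q.mem_closedBall_zero.2 ?_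
  exact hdiff.hasFDerivAt.seminorm_apply_le p q hq
    (eventually_of_mem (hU.mem_nhds (hsU hx)) (hfL x (hsU hx))) v

theorem setAverage_fderiv_apply_eq_zero (hf : LipschitzWith K f) {s U : Set E}
    (hs : MeasurableSet s) (hs0 : μ s ≠ 0) (hsfin : μ s ≠ ∞) (hU : IsOpen U) (hsU : s ⊆ U)
    (ℓ : F →L[ℝ] G) (hfℓ : ∀ x ∈ U, ℓ (f x) = 0) (v : E) :
    ℓ ((⨍ x in s, fderiv ℝ f x ∂μ) v) = 0 :=
  hf.setAverage_fderiv_apply_mem (t := LinearMap.ker (ℓ : F →ₗ[ℝ] G)) hs hs0 hsfin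
    (Submodule.convex _) ℓ.isClosed_ker v fun _ hx hdiff =>
      hdiff.hasFDerivAt.apply_eq_zero_of_eventually ℓ
        (eventually_of_mem (hU.mem_nhds (hsU hx)) hfℓ) v

theorem tendsto_average_slope (hf : LipschitzWith K f) {ν : Measure E} [IsFiniteMeasure ν]
    (hν : ν ≪ μ) (v : E) :
    Tendsto (fun t : ℝ => ⨍ x, t⁻¹ • (f (x + t • v) - f x) ∂ν) (𝓝[>] 0)
      (𝓝 (⨍ x, fderiv ℝ f x v ∂ν)) := by
  simp only [average_eq]
  refine Tendsto.const_smul (tendsto_integral_filter_of_dominated_convergence (fun _ => K * ‖v‖)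
    (.of_forall fun t => ?_) (.of_forall fun t => ae_of_all _ fun x => hf.norm_slope_le x v t)
    (integrable_const _) ?_) _
  · exact (continuous_const.smul ((hf.continuous.comp (continuous_id.add continuous_const)).sub
      hf.continuous)).aestronglyMeasurable
  · filter_upwards [hν.ae_le (hf.ae_differentiableAt (μ := μ))] with x hx
    exact (hx.hasFDerivAt.hasLineDerivAt v).tendsto_slope_zero_right

end LipschitzWith

theorem setIntegral_Icc_comp_add {ι G : Type*} [Fintype ι] [NormedAddCommGroup G]
    [NormedSpace ℝ G] (g : (ι → ℝ) → G) (l u a : ι → ℝ) :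
    ∫ x in Icc l u, g (x + a) = ∫ y in Icc (l + a) (u + a), g y := by
  rw [← (measurePreserving_add_right volume a).setIntegral_preimage_emb
    (MeasurableEquiv.addRight a).measurableEmbedding g, preimage_add_const_Icc,
    add_sub_cancel_right, add_sub_cancel_right]

section Box

variable {ι G : Type*} [Fintype ι] [DecidableEq ι] [NormedAddCommGroup G] [NormedSpace ℝ G]

theorem volume_real_Icc_inter_Icc_add_single {u : ι → ℝ} (hu : 0 ≤ u) {i : ι} {h : ℝ}
    (hh : 0 ≤ h) (hhu : h ≤ u i) :
    volume.real (Icc 0 u ∩ Icc (Pi.single i h) (u + Pi.single i h))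
      = (u i - h) * ∏ j ∈ {i}ᶜ, u j := by
  have ha : (0 : ι → ℝ) ≤ Pi.single i h := Pi.single_nonneg.2 hh
  have hau : Pi.single i h ≤ u := by
    intro j
    rcases eq_or_ne j i with rfl | hj
    · simpa using hhu
    · simpa [hj] using hu j
  rw [Icc_inter_Icc, sup_eq_right.2 ha, inf_eq_left.2 (le_add_of_nonneg_right ha),
    measureReal_def, Real.volume_Icc_pi_toReal hau, Fintype.prod_eq_mul_prod_compl i]
  congr 1
  · simp
  · refine Finset.prod_congr rfl fun j hj => ?_
    simp [Pi.single_eq_of_ne (show j ≠ i by simpa using hj)]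

theorem volume_real_Icc_eq_mul_prod_compl (a : ι → ℝ) {u : ι → ℝ} (hu : 0 ≤ u) (i : ι) :
    volume.real (Icc a (u + a)) = u i * ∏ j ∈ {i}ᶜ, u j := by
  rw [measureReal_def, Real.volume_Icc_pi_toReal (by simpa using hu),
    ← Fintype.prod_eq_mul_prod_compl]
  simp

theorem volume_real_Icc_sdiff_add_sdiff_add_single {u : ι → ℝ} (hu : 0 ≤ u) {i : ι} {h : ℝ}
    (hh : 0 ≤ h) (hhu : h ≤ u i) :
    volume.real (Icc (Pi.single i h) (u + Pi.single i h) \ Icc 0 u)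
      + volume.real (Icc 0 u \ Icc (Pi.single i h) (u + Pi.single i h))
      = 2 * h * ∏ j ∈ {i}ᶜ, u j := by
  have hfin : ∀ b c : ι → ℝ, volume (Icc b c) ≠ ∞ := fun b c => isCompact_Icc.measure_lt_top.ne
  have h₁ := measureReal_sdiff_add_inter (μ := volume) (s := Icc 0 u)
    (t := Icc (Pi.single i h) (u + Pi.single i h)) measurableSet_Icc (hfin _ _)
  have h₂ := measureReal_sdiff_add_inter (μ := volume) (t := Icc 0 u)
    (s := Icc (Pi.single i h) (u + Pi.single i h)) measurableSet_Icc (hfin _ _)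
  have hQ := volume_real_Icc_eq_mul_prod_compl 0 hu i
  rw [add_zero] at hQ
  rw [inter_comm] at h₂
  linear_combination h₁ + h₂ + hQ + volume_real_Icc_eq_mul_prod_compl (Pi.single i h) hu i
    - 2 * volume_real_Icc_inter_Icc_add_single hu hh hhu

theorem norm_setAverage_sub_comp_add_single_le {g : (ι → ℝ) → G} (hg : Continuous g)
    {u : ι → ℝ} (hu : ∀ j, 0 < u j) {i : ι} {h : ℝ} (hh : 0 < h) (hhu : h ≤ u i) {η : ℝ}
    (hη : ∀ y ∈ Icc 0 (u + Pi.single i h), ‖g y‖ ≤ η) :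
    ‖⨍ x in Icc 0 u, (g (x + Pi.single i h) - g x)‖ ≤ 2 * η * h / u i := by
  have hu0 : 0 ≤ u := fun j => (hu j).le
  have hvol := volume_real_Icc_sdiff_add_sdiff_add_single hu0 hh.le hhu
  have hvolQ := volume_real_Icc_eq_mul_prod_compl 0 hu0 i
  rw [add_zero] at hvolQ
  set a : ι → ℝ := Pi.single i h
  have ha : 0 ≤ a := Pi.single_nonneg.2 hh.le
  have hQ : Icc 0 u ⊆ Icc 0 (u + a) := Icc_subset_Icc le_rfl (le_add_of_nonneg_right ha)
  have hQ' : Icc a (u + a) ⊆ Icc 0 (u + a) := Icc_subset_Icc ha le_rfl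
  have hint : IntegrableOn g (Icc 0 (u + a)) := hg.continuousOn.integrableOn_compact isCompact_Icc
  have hint' : IntegrableOn (fun x => g (x + a)) (Icc 0 u) :=
    (hg.comp (continuous_add_const a)).continuousOn.integrableOn_compact isCompact_Icc
  have hsym := norm_setIntegral_sub_setIntegral_le measurableSet_Icc measurableSet_Icc
    isCompact_Icc.measure_lt_top.ne isCompact_Icc.measure_lt_top.ne
    (hint.mono_set (union_subset hQ hQ')) fun y hy => hη y (union_subset hQ hQ' hy)
  rw [hvol] at hsym
  have hP : 0 < ∏ j ∈ {i}ᶜ, u j := Finset.prod_pos fun j _ => hu j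
  rw [setAverage_eq, integral_sub hint' (hint.mono_set hQ), setIntegral_Icc_comp_add, zero_add,
    norm_smul, norm_inv, Real.norm_of_nonneg measureReal_nonneg, hvolQ]
  calc (u i * ∏ j ∈ {i}ᶜ, u j)⁻¹ * ‖(∫ y in Icc a (u + a), g y) - ∫ x in Icc 0 u, g x‖
      ≤ (u i * ∏ j ∈ {i}ᶜ, u j)⁻¹ * (η * (2 * h * ∏ j ∈ {i}ᶜ, u j)) :=
        mul_le_mul_of_nonneg_left hsym (inv_pos.2 (mul_pos (hu i) hP)).le
    _ = 2 * η * h / u i := by field_simp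

theorem LipschitzWith.norm_setAverage_fderiv_single_sub_le {F : (ι → ℝ) → (ι → ℝ)} {K : ℝ≥0}
    (hF : LipschitzWith K F) {u : ι → ℝ} (hu : ∀ j, 0 < u j) {i : ι} {W : Set (ι → ℝ)}
    (hW : ∀ᶠ h in 𝓝[>] 0, Icc 0 (u + Pi.single i h) ⊆ W) {η : ℝ}
    (hFW : ∀ y ∈ W, ‖F y - y‖ ≤ η) :
    ‖(⨍ x in Icc 0 u, fderiv ℝ F x) (Pi.single i 1) - Pi.single i 1‖ ≤ 2 * η / u i := by
  have : IsFiniteMeasure (volume.restrict (Icc 0 u)) :=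
    isFiniteMeasure_restrict.2 isCompact_Icc.measure_lt_top.ne
  set g : (ι → ℝ) → (ι → ℝ) := fun y => F y - y
  have hg : Continuous g := hF.continuous.sub continuous_id
  rw [hF.average_fderiv_apply]
  refine le_of_tendsto (((hF.tendsto_average_slope (μ := volume)
    Measure.absolutelyContinuous_restrict _).sub_const _).norm) ?_
  filter_upwards [hW, Ioc_mem_nhdsGT (hu i)] with t htW ⟨ht0, htu⟩
  have hvQ : volume.real (Icc 0 u) ≠ 0 := by
    rw [measureReal_def, Real.volume_Icc_pi_toReal (show (0 : ι → ℝ) ≤ u from fun j => (hu j).le)]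
    exact (Finset.prod_pos fun j _ => by simpa using hu j).ne'
  have hslope : ∀ x, t⁻¹ • (F (x + t • Pi.single i 1) - F x)
      = t⁻¹ • (g (x + Pi.single i t) - g x) + Pi.single i 1 := by
    intro x
    have hsingle : Pi.single i (1 : ℝ) = t⁻¹ • Pi.single i t := by
      rw [← Pi.single_smul, smul_eq_mul, inv_mul_cancel₀ ht0.ne']
    rw [hsingle, smul_smul, mul_inv_cancel₀ ht0.ne', one_smul, ← smul_add]
    congr 1
    simp only [g]
    abel
  have hint : IntegrableOn (fun x => t⁻¹ • (g (x + Pi.single i t) - g x)) (Icc 0 u) :=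
    (show Continuous fun x => t⁻¹ • (g (x + Pi.single i t) - g x) by fun_prop).continuousOn
      |>.integrableOn_compact isCompact_Icc
  simp_rw [hslope]
  rw [setAverage_eq, integral_add hint (integrable_const _), integral_smul, setIntegral_const,
    smul_add, inv_smul_smul₀ hvQ, add_sub_cancel_right, smul_comm _ t⁻¹, norm_smul, ← setAverage_eq]
  calc ‖t⁻¹‖ * ‖⨍ x in Icc 0 u, (g (x + Pi.single i t) - g x)‖
      ≤ t⁻¹ * (2 * η * t / u i) := by
        rw [norm_inv, Real.norm_of_nonneg ht0.le]
        gcongr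
        exact norm_setAverage_sub_comp_add_single_le hg hu ht0 htu fun y hy => hFW y (htW hy)
    _ = 2 * η / u i := by field_simp

end Box

theorem Icc_add_subset_thickening {ι : Type*} [Fintype ι] {a b c : ι → ℝ} (hab : a ≤ b)
    (hc : 0 ≤ c) {ε : ℝ} (hcε : ‖c‖ < ε) : Icc a (b + c) ⊆ thickening ε (Icc a b) := by
  rintro x ⟨hax, hxb⟩
  refine mem_thickening_iff.2 ⟨x ⊓ b, ⟨le_inf hax hab, inf_le_right⟩, lt_of_le_of_lt ?_ hcε⟩
  rw [dist_eq_norm]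
  refine (pi_norm_le_iff_of_nonneg (norm_nonneg c)).2 fun j => ?_
  have hj : x j - min (x j) (b j) ≤ c j := by
    rcases le_total (x j) (b j) with h | h
    · simpa [min_eq_left h] using hc j
    · rw [min_eq_right h, sub_le_iff_le_add']
      exact hxb j
  rw [Pi.sub_apply, Pi.inf_apply, Real.norm_of_nonneg (sub_nonneg.2 (min_le_left _ _))]
  exact hj.trans ((le_abs_self _).trans (norm_le_pi_norm c j))

theorem Icc_add_const_add_single_subset_thickening {ι : Type*} [Fintype ι] [DecidableEq ι]
    {b : ι → ℝ} (hb : 0 ≤ b) {δ ε : ℝ} (hδ : 0 ≤ δ) (hδε : 2 * δ < ε) (i : ι) {h : ℝ}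
    (h0 : 0 ≤ h) (hhδ : h ≤ δ) :
    Icc 0 (b + (fun _ => δ) + Pi.single i h) ⊆ thickening ε (Icc 0 b) := by
  have hsingle : ∀ j, 0 ≤ (Pi.single i h : ι → ℝ) j ∧ (Pi.single i h : ι → ℝ) j ≤ δ := fun j => by
    rcases eq_or_ne j i with rfl | hj <;> simp [*]
  rw [add_assoc]
  refine Icc_add_subset_thickening hb (fun j => add_nonneg hδ (hsingle j).1) (lt_of_le_of_lt
    ((pi_norm_le_iff_of_nonneg (by positivity : (0 : ℝ) ≤ 2 * δ)).2 fun j => ?_) hδε)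
  rw [Real.norm_of_nonneg (add_nonneg hδ (hsingle j).1)]
  linarith [(hsingle j).2]

theorem exists_averaged_fderiv_of_lipschitzOn_near_id {ι G : Type*} [Fintype ι] [DecidableEq ι]
    [NormedAddCommGroup G] [NormedSpace ℝ G] (p : Seminorm ℝ (ι → ℝ)) {c : ℝ} (hc : 0 < c)
    (hpc : ∀ x, c * ‖x‖ ≤ p x) (ℓ : (ι → ℝ) →L[ℝ] G) {b : ι → ℝ} (hb : 0 ≤ b)
    {U : Set (ι → ℝ)} (hU : IsOpen U) (hbU : Icc 0 b ⊆ U) {Ψ : (ι → ℝ) → (ι → ℝ)} {L ξ : ℝ}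
    (hL : 0 ≤ L) (hΨℓ : ∀ x ∈ U, ℓ (Ψ x) = 0)
    (hΨL : ∀ x ∈ U, ∀ y ∈ U, p (Ψ x - Ψ y) ≤ L * p (x - y))
    (hΨξ : ∀ x ∈ U, p (Ψ x - x) ≤ ξ) :
    ∃ A : (ι → ℝ) →L[ℝ] (ι → ℝ), (∀ v, p (A v) ≤ L * p v) ∧ (∀ v, ℓ (A v) = 0) ∧
      ∀ i, 0 < b i → ‖A (Pi.single i 1) - Pi.single i 1‖ ≤ 2 * ξ / (c * b i) := by
  have hp := p.continuous_of_finiteDimensional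
  obtain ⟨C, hC, hpC⟩ := p.bound_of_continuous_normedSpace hp
  obtain ⟨F, hF, hFΨ⟩ := (lipschitzOnWith_of_seminorm_le p p hc hC.le hL hpc hpC hΨL).extend_pi
  obtain ⟨ε, hε, hεU⟩ := isCompact_Icc.exists_thickening_subset_open hU hbU
  obtain ⟨δ, hδ, hδε⟩ : ∃ δ, 0 < δ ∧ 2 * δ < ε := ⟨ε / 3, by positivity, by linarith⟩
  set u : ι → ℝ := b + fun _ => δ
  have hu : ∀ j, 0 < u j := fun j => add_pos_of_nonneg_of_pos (hb j) hδ
  have hQU : Icc 0 u ⊆ U := (Icc_add_subset_thickening hb (fun _ => hδ.le) (lt_of_le_of_lt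
    ((pi_norm_le_iff_of_nonneg hδ.le).2 fun _ => (Real.norm_of_nonneg hδ.le).le)
    (by linarith))).trans hεU
  have hbox : ∀ i, ∀ᶠ h in 𝓝[>] 0, Icc 0 (u + Pi.single i h) ⊆ U := fun i => by
    filter_upwards [Ioc_mem_nhdsGT hδ] with h ⟨h0, hhδ⟩
    exact (Icc_add_const_add_single_subset_thickening hb hδ.le hδε i h0.le hhδ).trans hεU
  have hQ0 : volume (Icc 0 u) ≠ 0 := by
    simp [Real.volume_Icc_pi, Finset.prod_ne_zero_iff, hu]
  have hQfin : volume (Icc 0 u) ≠ ∞ := isCompact_Icc.measure_lt_top.ne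
  refine ⟨⨍ x in Icc 0 u, fderiv ℝ F x, fun v => ?_, fun v => ?_, fun i hi => ?_⟩
  · refine hF.seminorm_setAverage_fderiv_apply_le measurableSet_Icc hQ0 hQfin hU hQU p p hp
      (fun x hx y hy => ?_) v
    rw [← hFΨ hx, ← hFΨ hy]
    exact hΨL y hy x hx
  · exact hF.setAverage_fderiv_apply_eq_zero measurableSet_Icc hQ0 hQfin hU hQU ℓ
      (fun x hx => hFΨ hx ▸ hΨℓ x hx) v
  · have hξ0 : 0 ≤ ξ := (apply_nonneg p _).trans (hΨξ 0 (hbU ⟨le_rfl, hb⟩))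
    have hFU : ∀ y ∈ U, ‖F y - y‖ ≤ ξ / c := fun y hy => by
      rw [le_div_iff₀' hc, ← hFΨ hy]
      exact (hpc _).trans (hΨξ y hy)
    refine (hF.norm_setAverage_fderiv_single_sub_le hu (hbox i) hFU).trans ?_
    rw [mul_div_assoc', div_div]
    gcongr
    exact le_add_of_nonneg_right hδ.le

theorem exists_contraction_of_tendsto {E : Type*} [NormedAddCommGroup E] [NormedSpace ℝ E]
    [FiniteDimensional ℝ E] (p : Seminorm ℝ E) {c : ℝ} (hc : 0 < c) (hpc : ∀ x, c * ‖x‖ ≤ p x)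
    {K V : Set E} (hK : IsClosed K) (A : ℕ → E →L[ℝ] E) {ξ : ℕ → ℝ}
    (hξ : Tendsto ξ atTop (𝓝 0)) (hAp : ∀ k v, p (A k v) ≤ (1 + ξ k) * p v)
    (hAK : ∀ k v, A k v ∈ K) (hAV : ∀ w ∈ V, Tendsto (fun k => A k w) atTop (𝓝 w)) :
    ∃ T : E →L[ℝ] E, (∀ v, p (T v) ≤ p v) ∧ (∀ v, T v ∈ K) ∧ ∀ w ∈ V, T w = w := by
  have hp := p.continuous_of_finiteDimensional
  obtain ⟨C, hC, hpC⟩ := p.bound_of_continuous_normedSpace hp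
  obtain ⟨M, hM⟩ := hξ.bddAbove_range
  set R := (1 + max M 0) * C / c
  have hAR : ∀ k, A k ∈ closedBall 0 R := by
    intro k
    rw [mem_closedBall_zero_iff]
    refine (A k).opNorm_le_bound (by positivity) fun v => ?_
    rw [div_mul_eq_mul_div, le_div_iff₀' hc]
    calc c * ‖A k v‖ ≤ p (A k v) := hpc _
      _ ≤ (1 + ξ k) * p v := hAp k v
      _ ≤ (1 + max M 0) * (C * ‖v‖) :=
        mul_le_mul (by linarith [hM ⟨k, rfl⟩, le_max_left M 0]) (hpC v) (apply_nonneg p v)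
          (by positivity)
      _ = (1 + max M 0) * C * ‖v‖ := by ring
  obtain ⟨T, -, φ, hφ, hT⟩ := (isCompact_closedBall (0 : E →L[ℝ] E) R).tendsto_subseq hAR
  have hTv : ∀ v, Tendsto (fun j => A (φ j) v) atTop (𝓝 (T v)) := fun v =>
    ((ContinuousLinearMap.apply ℝ E v).continuous.tendsto T).comp hT
  refine ⟨T, fun v => ?_, fun v => hK.mem_of_tendsto (hTv v) (.of_forall fun j => hAK _ v),
    fun w hw => tendsto_nhds_unique (hTv w) ((hAV w hw).comp hφ.tendsto_atTop)⟩
  have hξφ : Tendsto (fun j => (1 + ξ (φ j)) * p v) atTop (𝓝 (p v)) := by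
    simpa using ((hξ.comp hφ.tendsto_atTop).const_add 1).mul_const (p v)
  exact le_of_tendsto_of_tendsto ((hp.tendsto _).comp (hTv v)) hξφ (.of_forall fun j => hAp _ v)

theorem stmt9 (n : (Fin 3 → ℝ) → ℝ)
    (hn_add : ∀ x y, n (x + y) ≤ n x + n y)
    (hn_smul : ∀ (c : ℝ) x, n (c • x) = |c| * n x)
    (hn_pos : ∀ x, x ≠ 0 → 0 < n x)
    (hproj : ¬ ∃ T : (Fin 3 → ℝ) →ₗ[ℝ] (Fin 3 → ℝ),
      (∀ x, T x 2 = 0) ∧ (∀ x, x 2 = 0 → T x = x) ∧ (∀ x, n (T x) ≤ n x)) :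
    ¬ (∀ ξ > (0 : ℝ), ∃ (U : Set (Fin 3 → ℝ)) (Ψ : (Fin 3 → ℝ) → (Fin 3 → ℝ)),
      IsOpen U ∧
      {x : Fin 3 → ℝ | x 0 ∈ Set.Icc (0 : ℝ) 1 ∧ x 1 ∈ Set.Icc (0 : ℝ) 1 ∧ x 2 = 0} ⊆ U ∧
      (∀ x ∈ U, Ψ x ∈
        {x : Fin 3 → ℝ | x 0 ∈ Set.Icc (-(1 / 2) : ℝ) (3 / 2) ∧
          x 1 ∈ Set.Icc (-(1 / 2) : ℝ) (3 / 2) ∧ x 2 = 0}) ∧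
      (∀ x ∈ U, ∀ y ∈ U, n (Ψ x - Ψ y) ≤ (1 + ξ) * n (x - y)) ∧
      (∀ x ∈ U, n (Ψ x - x) ≤ ξ)) := by
  intro h
  let p : Seminorm ℝ (Fin 3 → ℝ) := .of n hn_add fun a x => by rw [hn_smul, Real.norm_eq_abs]
  obtain ⟨c, hc, hpc⟩ := p.exists_pos_mul_norm_le hn_pos
  set b : Fin 3 → ℝ := ![1, 1, 0]
  have hb : 0 ≤ b := fun j => by fin_cases j <;> simp [b]
  have hbC : Icc 0 b ⊆ {x : Fin 3 → ℝ | x 0 ∈ Icc (0 : ℝ) 1 ∧ x 1 ∈ Icc (0 : ℝ) 1 ∧ x 2 = 0} :=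
    fun x hx => ⟨⟨hx.1 0, hx.2 0⟩, ⟨hx.1 1, hx.2 1⟩, le_antisymm (hx.2 2) (hx.1 2)⟩
  have hA : ∀ k : ℕ, ∃ A : (Fin 3 → ℝ) →L[ℝ] (Fin 3 → ℝ),
      (∀ v, p (A v) ≤ (1 + 1 / (k + 1)) * p v) ∧ (∀ v, A v 2 = 0) ∧
      ∀ i, 0 < b i → ‖A (Pi.single i 1) - Pi.single i 1‖ ≤ 2 * (1 / (k + 1)) / (c * b i) := by
    intro k
    obtain ⟨U, Ψ, hU, hCU, hΨD, hΨL, hΨξ⟩ := h (1 / (k + 1)) (by positivity)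
    exact exists_averaged_fderiv_of_lipschitzOn_near_id p hc hpc (.proj 2) hb hU (hbC.trans hCU)
      (by positivity) (fun x hx => (hΨD x hx).2.2) hΨL hΨξ
  choose A hAp hA2 hAe using hA
  have hAV : ∀ w ∈ ({Pi.single 0 1, Pi.single 1 1} : Set (Fin 3 → ℝ)),
      Tendsto (fun k => A k w) atTop (𝓝 w) := by
    rintro w (rfl | rfl) <;>
    refine tendsto_sub_nhds_zero_iff.1 (squeeze_zero_norm (fun k => hAe k _ (by simp [b])) ?_) <;>
    simpa using ((tendsto_one_div_add_atTop_nhds_zero_nat (𝕜 := ℝ)).const_mul 2).div_const _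
  obtain ⟨T, hTp, hT2, hTV⟩ := exists_contraction_of_tendsto p hc hpc
    (isClosed_eq (continuous_apply 2) continuous_const) A
    tendsto_one_div_add_atTop_nhds_zero_nat hAp hA2 hAV
  refine hproj ⟨T, hT2, fun x hx => ?_, hTp⟩
  have hx' : x = x 0 • Pi.single 0 1 + x 1 • Pi.single 1 1 := by
    ext j; fin_cases j <;> simp [hx]
  rw [hx', map_add, map_smul, map_smul, ContinuousLinearMap.coe_coe, hTV _ (.inl rfl),
    hTV _ (.inr rfl)]
end

section
/- Let Ψ: U → ℝ² × {0} be a C^1 map on an open set U ⊆ ℝ³ containing C = [0,1]² × {0}, and suppose ‖Ψ(x) − x‖' ≤ ξ for all x ∈ U, for some norm ‖·‖' on ℝ³ and ξ > 0. Define the linear map T: ℝ³ → ℝ² × {0} by T(v) = ∫_{[0,1]²} DΨ(x, y, 0)(v) dx dy. Then ‖T(e₁) − e₁‖' ≤ 2ξ and ‖T(e₂) − e₂‖' ≤ 2ξ, where e₁ = (1,0,0) and e₂ = (0,1,0). -/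
/-!
By the fundamental theorem of calculus along the segments parallel to `eᵢ`, the inner integral of
`DΨ(·) eᵢ` is a difference `Ψ(b) - Ψ(a)` with `b - a = eᵢ`, and
`Ψ(b) - Ψ(a) - eᵢ = (Ψ(b) - b) - (Ψ(a) - a)` has norm at most `2ξ`. The outer integral is an
average over a probability measure, and the closed convex set `{v | ‖v‖' ≤ 2ξ}` contains the
average of any integrable function with values in it. For `e₁` the two integrals are first swapped
(Fubini, the integrand being continuous on the square).
-/

open Set MeasureTheory

theorem Seminorm.continuous_of_finiteDimensional_s10 {E : Type*} [NormedAddCommGroup E]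
    [NormedSpace ℝ E] [FiniteDimensional ℝ E] (p : Seminorm ℝ E) : Continuous p :=
  continuousOn_univ.mp (p.convexOn.continuousOn isOpen_univ)

theorem Seminorm.integral_le_of_ae_le {α E : Type*} [MeasurableSpace α] [NormedAddCommGroup E]
    [NormedSpace ℝ E] [CompleteSpace E] {μ : Measure α} [IsProbabilityMeasure μ]
    (p : Seminorm ℝ E) (hp : Continuous p) {f : α → E} (hf : Integrable f μ) {M : ℝ}
    (hM : ∀ᵐ x ∂μ, p (f x) ≤ M) : p (∫ x, f x ∂μ) ≤ M :=
  Convex.integral_mem (s := {y | p y ≤ M}) (by simpa using p.convexOn.convex_le M)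
    (isClosed_le hp continuous_const) hM hf

theorem setIntegral_Icc_setIntegral_Icc_swap {E : Type*} [NormedAddCommGroup E]
    [NormedSpace ℝ E] {a b c d : ℝ} {f : ℝ → ℝ → E}
    (hf : ContinuousOn (Function.uncurry f) (Icc a b ×ˢ Icc c d)) :
    ∫ x in Icc a b, ∫ y in Icc c d, f x y = ∫ y in Icc c d, ∫ x in Icc a b, f x y := by
  refine integral_integral_swap ?_
  rw [Measure.prod_restrict]
  exact hf.integrableOn_compact (isCompact_Icc.prod isCompact_Icc)

theorem integral_Icc_fderiv_smul_add {E F : Type*} [NormedAddCommGroup E] [NormedSpace ℝ E]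
    [NormedAddCommGroup F] [NormedSpace ℝ F] [CompleteSpace F] {U : Set E} {f : E → F}
    (hU : IsOpen U) (hf : ContDiffOn ℝ 1 f U) {c d : E}
    (hcd : ∀ t ∈ Icc (0 : ℝ) 1, t • d + c ∈ U) :
    ∫ t in Icc (0 : ℝ) 1, fderiv ℝ f (t • d + c) d = f (d + c) - f c := by
  have hderiv : ∀ t ∈ uIcc (0 : ℝ) 1,
      HasDerivAt (fun s : ℝ => f (s • d + c)) (fderiv ℝ f (t • d + c) d) t := by
    intro t ht
    rw [uIcc_of_le zero_le_one] at ht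
    have hft : HasFDerivAt f (fderiv ℝ f (t • d + c)) (t • d + c) :=
      ((hf.differentiableOn one_ne_zero).differentiableAt (hU.mem_nhds (hcd t ht))).hasFDerivAt
    exact hft.comp_hasDerivAt t (by simpa using ((hasDerivAt_id t).smul_const d).add_const c)
  have hcont : ContinuousOn (fun t : ℝ => fderiv ℝ f (t • d + c) d) (uIcc 0 1) := by
    rw [uIcc_of_le zero_le_one]
    exact ((hf.continuousOn_fderiv_of_isOpen hU le_rfl).comp (by fun_prop) hcd).clm_apply
      continuousOn_const
  rw [integral_Icc_eq_integral_Ioc, ← intervalIntegral.integral_of_le zero_le_one,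
    intervalIntegral.integral_eq_sub_of_hasDerivAt hderiv hcont.intervalIntegrable]
  simp

theorem Seminorm.integral_integral_fderiv_sub_le {E : Type*} [NormedAddCommGroup E]
    [NormedSpace ℝ E] [CompleteSpace E] (p : Seminorm ℝ E) (hp : Continuous p) {U : Set E}
    (hU : IsOpen U) {Ψ : E → E} (hΨ : ContDiffOn ℝ 1 Ψ U) {ξ : ℝ}
    (hΨξ : ∀ x ∈ U, p (Ψ x - x) ≤ ξ) (d : E) {c : ℝ → E} (hc : ContinuousOn c (Icc 0 1))
    (hcd : ∀ r ∈ Icc (0 : ℝ) 1, ∀ s ∈ Icc (0 : ℝ) 1, s • d + c r ∈ U) :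
    p ((∫ r in Icc (0 : ℝ) 1, ∫ s in Icc (0 : ℝ) 1, fderiv ℝ Ψ (s • d + c r) d) - d) ≤ 2 * ξ := by
  have hftc : ∀ r ∈ Icc (0 : ℝ) 1,
      ∫ s in Icc (0 : ℝ) 1, fderiv ℝ Ψ (s • d + c r) d = Ψ (d + c r) - Ψ (c r) :=
    fun r hr => integral_Icc_fderiv_smul_add hU hΨ (hcd r hr)
  have hint : IntegrableOn (fun r => Ψ (d + c r) - Ψ (c r)) (Icc 0 1) := by
    refine ContinuousOn.integrableOn_compact isCompact_Icc (.sub ?_ ?_)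
    · exact hΨ.continuousOn.comp (continuousOn_const.add hc) fun r hr => by
        simpa using hcd r hr 1 (by simp)
    · exact hΨ.continuousOn.comp hc fun r hr => by simpa using hcd r hr 0 (by simp)
  have : IsProbabilityMeasure (volume.restrict (Icc (0 : ℝ) 1)) := ⟨by simp⟩
  have hmean : (∫ r in Icc (0 : ℝ) 1, (Ψ (d + c r) - Ψ (c r))) - d
      = ∫ r in Icc (0 : ℝ) 1, (Ψ (d + c r) - Ψ (c r) - d) := by
    rw [integral_sub hint (integrable_const d), integral_const]
    simp
  have hbound : ∀ r ∈ Icc (0 : ℝ) 1, p (Ψ (d + c r) - Ψ (c r) - d) ≤ 2 * ξ := by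
    intro r hr
    have hsplit : Ψ (d + c r) - Ψ (c r) - d = (Ψ (d + c r) - (d + c r)) - (Ψ (c r) - c r) := by
      abel
    rw [hsplit, two_mul]
    calc p _ ≤ p (Ψ (d + c r) - (d + c r)) + p (Ψ (c r) - c r) := map_sub_le_add p _ _
      _ ≤ ξ + ξ := add_le_add (hΨξ _ (by simpa using hcd r hr 1 (by simp)))
          (hΨξ _ (by simpa using hcd r hr 0 (by simp)))
  rw [setIntegral_congr_fun measurableSet_Icc hftc, hmean]
  exact p.integral_le_of_ae_le hp (hint.sub (integrable_const d))
    (ae_restrict_of_forall_mem measurableSet_Icc hbound)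

theorem stmt10_general (n : (Fin 3 → ℝ) → ℝ)
    (hn_add : ∀ x y, n (x + y) ≤ n x + n y)
    (hn_smul : ∀ (c : ℝ) x, n (c • x) = |c| * n x)
    (ξ : ℝ)
    (U : Set (Fin 3 → ℝ)) (hUopen : IsOpen U)
    (hCU : {x : Fin 3 → ℝ | x 0 ∈ Set.Icc (0 : ℝ) 1 ∧ x 1 ∈ Set.Icc (0 : ℝ) 1 ∧ x 2 = 0} ⊆ U)
    (Ψ : (Fin 3 → ℝ) → (Fin 3 → ℝ)) (hΨC1 : ContDiffOn ℝ 1 Ψ U)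
    (hΨξ : ∀ x ∈ U, n (Ψ x - x) ≤ ξ)
    (T : (Fin 3 → ℝ) →ₗ[ℝ] (Fin 3 → ℝ))
    (hT : ∀ v, T v = ∫ p in Set.Icc (0 : ℝ) 1, ∫ q in Set.Icc (0 : ℝ) 1,
      fderiv ℝ Ψ ![p, q, 0] v) :
    n (T ![1, 0, 0] - ![1, 0, 0]) ≤ 2 * ξ ∧ n (T ![0, 1, 0] - ![0, 1, 0]) ≤ 2 * ξ := by
  let N : Seminorm ℝ (Fin 3 → ℝ) := Seminorm.of n hn_add hn_smul
  have hsquare : ∀ a ∈ Icc (0 : ℝ) 1, ∀ b ∈ Icc (0 : ℝ) 1, ![a, b, 0] ∈ U :=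
    fun a ha b hb => hCU ⟨ha, hb, rfl⟩
  have hT₁ : T ![1, 0, 0] = ∫ b in Icc (0 : ℝ) 1, ∫ a in Icc (0 : ℝ) 1,
      fderiv ℝ Ψ (a • ![1, 0, 0] + ![0, b, 0]) ![1, 0, 0] := by
    rw [hT, setIntegral_Icc_setIntegral_Icc_swap]
    · simp
    · exact ((hΨC1.continuousOn_fderiv_of_isOpen hUopen le_rfl).comp (by fun_prop)
        fun z hz => hsquare z.1 hz.1 z.2 hz.2).clm_apply continuousOn_const
  have hT₂ : T ![0, 1, 0] = ∫ a in Icc (0 : ℝ) 1, ∫ b in Icc (0 : ℝ) 1,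
      fderiv ℝ Ψ (b • ![0, 1, 0] + ![a, 0, 0]) ![0, 1, 0] := by
    rw [hT]
    simp
  constructor
  · rw [hT₁]
    exact N.integral_integral_fderiv_sub_le N.continuous_of_finiteDimensional_s10 hUopen
      hΨC1 hΨξ _ (by fun_prop) fun b hb a ha => by simpa using hsquare a ha b hb
  · rw [hT₂]
    exact N.integral_integral_fderiv_sub_le N.continuous_of_finiteDimensional_s10 hUopen
      hΨC1 hΨξ _ (by fun_prop) fun a ha b hb => by simpa using hsquare a ha b hb

theorem stmt10 (n : (Fin 3 → ℝ) → ℝ)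
    (hn_add : ∀ x y, n (x + y) ≤ n x + n y)
    (hn_smul : ∀ (c : ℝ) x, n (c • x) = |c| * n x)
    (hn_pos : ∀ x, x ≠ 0 → 0 < n x)
    (ξ : ℝ) (hξ : 0 < ξ)
    (U : Set (Fin 3 → ℝ)) (hUopen : IsOpen U)
    (hCU : {x : Fin 3 → ℝ | x 0 ∈ Set.Icc (0 : ℝ) 1 ∧ x 1 ∈ Set.Icc (0 : ℝ) 1 ∧ x 2 = 0} ⊆ U)
    (Ψ : (Fin 3 → ℝ) → (Fin 3 → ℝ)) (hΨC1 : ContDiffOn ℝ 1 Ψ U)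
    (hΨplane : ∀ x ∈ U, Ψ x 2 = 0)
    (hΨξ : ∀ x ∈ U, n (Ψ x - x) ≤ ξ)
    (T : (Fin 3 → ℝ) →ₗ[ℝ] (Fin 3 → ℝ))
    (hT : ∀ v, T v = ∫ p in Set.Icc (0 : ℝ) 1, ∫ q in Set.Icc (0 : ℝ) 1,
      fderiv ℝ Ψ ![p, q, 0] v) :
    n (T ![1, 0, 0] - ![1, 0, 0]) ≤ 2 * ξ ∧ n (T ![0, 1, 0] - ![0, 1, 0]) ≤ 2 * ξ :=
  stmt10_general n hn_add hn_smul ξ U hUopen hCU Ψ hΨC1 hΨξ T hT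
end

section
/- Let M ⊆ ℝ^N be bounded, ‖·‖ a norm on ℝ^N with K⁻¹‖·‖₂ ≤ ‖·‖ ≤ K‖·‖₂, ψ a Lipschitz retraction onto M defined on a neighbourhood of M (with ψ|_M = id, Euclidean Lipschitz constant L), and for s > 0 let ν_s be the standard mollifier supported in B_s. For f: M → ℝ 1-Lipschitz w.r.t. ‖·‖, define f̂_s(x) = ∫_{B_s} ν_s(z) f(ψ(x+z)) dz on the points x where this is defined. Then for all ε, δ > 0 and all x, y ∈ M in the domain of f̂_s with ‖x − y‖ ≥ δ and 0 < s ≤ εδ/(2LK), one has |f̂_s(x) − f̂_s(y)| ≤ (1 + ε)‖x − y‖. -/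
/-!
Averaging against a probability density preserves pointwise bounds on differences, so it suffices
to bound `|f (ψ (x + z)) - f (ψ (y + z))|` for `‖z‖ ≤ s`. As `ψ` fixes `x` and `y` and `f ∘ ψ` is
`KL`-Lipschitz near `M`, moving the base points by `z` costs at most `2KLs ≤ εδ ≤ ε ‖x - y‖`.
-/

open MeasureTheory
open scoped NNReal

theorem abs_setIntegral_mul_sub_le {α : Type*} [MeasurableSpace α] {μ : Measure α} {s : Set α}
    (hs : MeasurableSet s) {ν g₁ g₂ : α → ℝ} {C : ℝ} (hν : ∀ z ∈ s, 0 ≤ ν z)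
    (hν1 : ∫ z in s, ν z ∂μ = 1) (h₁ : IntegrableOn (fun z => ν z * g₁ z) s μ)
    (h₂ : IntegrableOn (fun z => ν z * g₂ z) s μ) (hg : ∀ z ∈ s, |g₁ z - g₂ z| ≤ C) :
    |∫ z in s, ν z * g₁ z ∂μ - ∫ z in s, ν z * g₂ z ∂μ| ≤ C := by
  have hνC : IntegrableOn (fun z => ν z * C) s μ :=
    (Integrable.of_integral_ne_zero (by rw [hν1]; exact one_ne_zero)).mul_const C
  rw [← integral_sub h₁ h₂]
  calc |∫ z in s, (ν z * g₁ z - ν z * g₂ z) ∂μ|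
      ≤ ∫ z in s, |ν z * g₁ z - ν z * g₂ z| ∂μ := abs_integral_le_integral_abs
    _ ≤ ∫ z in s, ν z * C ∂μ := by
        refine setIntegral_mono_on (h₁.sub h₂).abs hνC hs fun z hz => ?_
        rw [← mul_sub, abs_mul, abs_of_nonneg (hν z hz)]
        exact mul_le_mul_of_nonneg_left (hg z hz) (hν z hz)
    _ = C := by rw [integral_mul_const, hν1, one_mul]

theorem LipschitzOnWith.abs_sub_translate_le {X : Type*} [SeminormedAddCommGroup X]
    {g : X → ℝ} {C : ℝ≥0} {E : Set X} (hg : LipschitzOnWith C g E) {x y z : X}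
    (hx : x ∈ E) (hy : y ∈ E) (hxz : x + z ∈ E) (hyz : y + z ∈ E) :
    |g (x + z) - g (y + z)| ≤ |g x - g y| + 2 * C * ‖z‖ := by
  have hshift : ∀ p ∈ E, p + z ∈ E → |g (p + z) - g p| ≤ C * ‖z‖ := fun p hp hpz => by
    simpa [Real.dist_eq, dist_eq_norm] using hg.dist_le_mul _ hpz _ hp
  calc |g (x + z) - g (y + z)|
      ≤ |g (x + z) - g x| + |g x - g y| + |g y - g (y + z)| :=
        (abs_sub_le _ _ _).trans (by gcongr; exact abs_sub_le _ _ _)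
    _ ≤ |g x - g y| + 2 * C * ‖z‖ := by
        rw [abs_sub_comm (g y)]
        linarith [hshift x hx hxz, hshift y hy hyz]

theorem stmt12_general {N : ℕ} (n : EuclideanSpace ℝ (Fin N) → ℝ)
    (K : ℝ) (hK : 1 ≤ K)
    (hK2 : ∀ x, n x ≤ K * ‖x‖)
    (M E : Set (EuclideanSpace ℝ (Fin N)))
    (hME : M ⊆ E)
    (ψ : EuclideanSpace ℝ (Fin N) → EuclideanSpace ℝ (Fin N))
    (L : ℝ) (hL : 1 ≤ L)
    (hψLip : ∀ x ∈ E, ∀ y ∈ E, ‖ψ x - ψ y‖ ≤ L * ‖x - y‖)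
    (hψM : ∀ x ∈ E, ψ x ∈ M) (hψid : ∀ x ∈ M, ψ x = x)
    (f : EuclideanSpace ℝ (Fin N) → ℝ)
    (hf : ∀ x ∈ M, ∀ y ∈ M, |f x - f y| ≤ n (x - y))
    (νs : EuclideanSpace ℝ (Fin N) → ℝ)
    (hνnonneg : ∀ z, 0 ≤ νs z)
    (ε δ s : ℝ) (hε : 0 < ε)
    (hssmall : s ≤ ε * δ / (2 * L * K))
    (hνsupp : ∀ z, νs z ≠ 0 → ‖z‖ ≤ s)
    (hνint : ∫ z, νs z = 1)
    (x y : EuclideanSpace ℝ (Fin N)) (hx : x ∈ M) (hy : y ∈ M)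
    (hxdom : ∀ z ∈ Metric.closedBall (0 : EuclideanSpace ℝ (Fin N)) s, x + z ∈ E)
    (hydom : ∀ z ∈ Metric.closedBall (0 : EuclideanSpace ℝ (Fin N)) s, y + z ∈ E)
    (hfar : δ ≤ n (x - y)) :
    |(∫ z in Metric.closedBall (0 : EuclideanSpace ℝ (Fin N)) s, νs z * f (ψ (x + z))) -
        (∫ z in Metric.closedBall (0 : EuclideanSpace ℝ (Fin N)) s, νs z * f (ψ (y + z)))|
      ≤ (1 + ε) * n (x - y) := by
  have hK0 : 0 < K := by linarith
  have hL0 : 0 < L := by linarith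
  set B := Metric.closedBall (0 : EuclideanSpace ℝ (Fin N)) s
  have hfLip : LipschitzOnWith K.toNNReal f M := .of_dist_le' fun a ha b hb => by
    simpa [Real.dist_eq, dist_eq_norm] using (hf a ha b hb).trans (hK2 _)
  have hψLip' : LipschitzOnWith L.toNNReal ψ E := .of_dist_le' fun a ha b hb => by
    simpa [dist_eq_norm] using hψLip a ha b hb
  have hg : LipschitzOnWith (K.toNNReal * L.toNNReal) (fun z => f (ψ z)) E :=
    hfLip.comp hψLip' hψM
  have hνB : ∫ z in B, νs z = 1 := by
    rw [setIntegral_eq_integral_of_forall_compl_eq_zero fun z hz => ?_, hνint]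
    by_contra hne
    exact hz (by simpa [B] using hνsupp z hne)
  have hint : ∀ p, (∀ z ∈ B, p + z ∈ E) → IntegrableOn (fun z => νs z * f (ψ (p + z))) B :=
    fun p hp => (Integrable.of_integral_ne_zero (by simp [hνint])).integrableOn.mul_continuousOn
      (hg.continuousOn.comp (continuous_const.add continuous_id).continuousOn hp)
      (isCompact_closedBall _ _)
  have hpointwise : ∀ z ∈ B, |f (ψ (x + z)) - f (ψ (y + z))| ≤ n (x - y) + 2 * (K * L) * s := by
    intro z hz
    have hshift := hg.abs_sub_translate_le (hME hx) (hME hy) (hxdom z hz) (hydom z hz)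
    simp only [hψid x hx, hψid y hy, NNReal.coe_mul, Real.coe_toNNReal _ hK0.le,
      Real.coe_toNNReal _ hL0.le] at hshift
    refine hshift.trans ?_
    gcongr
    · exact hf x hx y hy
    · simpa [B] using hz
  have hsmall : s * (2 * L * K) ≤ ε * δ := (le_div_iff₀ (by positivity)).mp hssmall
  refine (abs_setIntegral_mul_sub_le measurableSet_closedBall (fun z _ => hνnonneg z) hνB
    (hint x hxdom) (hint y hydom) hpointwise).trans ?_
  nlinarith [mul_le_mul_of_nonneg_left hfar hε.le]

theorem stmt12 {N : ℕ} (n : EuclideanSpace ℝ (Fin N) → ℝ)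
    (hn_add : ∀ x y, n (x + y) ≤ n x + n y)
    (hn_smul : ∀ (c : ℝ) x, n (c • x) = |c| * n x)
    (hn_pos : ∀ x, x ≠ 0 → 0 < n x)
    (K : ℝ) (hK : 1 ≤ K)
    (hK1 : ∀ x, K⁻¹ * ‖x‖ ≤ n x) (hK2 : ∀ x, n x ≤ K * ‖x‖)
    (M E : Set (EuclideanSpace ℝ (Fin N))) (hMbdd : Bornology.IsBounded M)
    (hME : M ⊆ E) (hEopen : IsOpen E)
    (ψ : EuclideanSpace ℝ (Fin N) → EuclideanSpace ℝ (Fin N))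
    (L : ℝ) (hL : 1 ≤ L)
    (hψLip : ∀ x ∈ E, ∀ y ∈ E, ‖ψ x - ψ y‖ ≤ L * ‖x - y‖)
    (hψM : ∀ x ∈ E, ψ x ∈ M) (hψid : ∀ x ∈ M, ψ x = x)
    (f : EuclideanSpace ℝ (Fin N) → ℝ)
    (hf : ∀ x ∈ M, ∀ y ∈ M, |f x - f y| ≤ n (x - y))
    (νs : EuclideanSpace ℝ (Fin N) → ℝ) (hνcont : Continuous νs)
    (hνnonneg : ∀ z, 0 ≤ νs z)
    (ε δ s : ℝ) (hε : 0 < ε) (hδ : 0 < δ) (hs : 0 < s)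
    (hssmall : s ≤ ε * δ / (2 * L * K))
    (hνsupp : ∀ z, νs z ≠ 0 → ‖z‖ ≤ s)
    (hνint : ∫ z, νs z = 1)
    (x y : EuclideanSpace ℝ (Fin N)) (hx : x ∈ M) (hy : y ∈ M)
    (hxdom : ∀ z ∈ Metric.closedBall (0 : EuclideanSpace ℝ (Fin N)) s, x + z ∈ E)
    (hydom : ∀ z ∈ Metric.closedBall (0 : EuclideanSpace ℝ (Fin N)) s, y + z ∈ E)
    (hfar : δ ≤ n (x - y)) :
    |(∫ z in Metric.closedBall (0 : EuclideanSpace ℝ (Fin N)) s, νs z * f (ψ (x + z))) -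
        (∫ z in Metric.closedBall (0 : EuclideanSpace ℝ (Fin N)) s, νs z * f (ψ (y + z)))|
      ≤ (1 + ε) * n (x - y) :=
  stmt12_general n K hK hK2 M E hME ψ L hL hψLip hψM hψid f hf νs hνnonneg ε δ s hε hssmall hνsupp
    hνint x y hx hy hxdom hydom hfar
end
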